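/- arXiv:1609.09780 — 9 statements merged into one kernel-verified Lean document; each statement's English description precedes it below -/
import Mathlib

section
/- Let V be a 2-dimensional symplectic ℂ-vector space and W an orthogonal ℂ-vector space. The map (B₁,B₂,i) ↦ (tr B₁, tr B₂, i) is a bijection from {(B₁,B₂,i) ∈ 𝔭(V) × 𝔭(V) × Hom(W,V) : [B₁,B₂] + ii* = 0} onto ℂ² × {i ∈ Hom(W,V) : ii* = 0}. -/
/-- The space of ADHM data `(B₁, B₂, i, j)` with `j = i*`: `B₁, B₂` self-adjoint,
`j` adjoint to `i`, and `[B₁,B₂] + i i* = 0`. -/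
def ADHMData (V W : Type) [AddCommGroup V] [Module ℂ V]
    [AddCommGroup W] [Module ℂ W]
    (BV : LinearMap.BilinForm ℂ V) (BW : LinearMap.BilinForm ℂ W) : Type :=
  {p : (Module.End ℂ V × Module.End ℂ V) × (W →ₗ[ℂ] V) × (V →ₗ[ℂ] W) //
    (∀ u v : V, BV (p.1.1 u) v = BV u (p.1.1 v)) ∧
    (∀ u v : V, BV (p.1.2 u) v = BV u (p.1.2 v)) ∧
    (∀ (w : W) (v : V), BW w (p.2.2 v) = BV (p.2.1 w) v) ∧
    p.1.1 * p.1.2 - p.1.2 * p.1.1 + p.2.1 ∘ₗ p.2.2 = 0}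

/-- The map `(B₁, B₂, i, i*) ↦ (tr B₁, tr B₂, i)`. -/
noncomputable def ADHMTraceMap (V W : Type) [AddCommGroup V] [Module ℂ V]
    [AddCommGroup W] [Module ℂ W]
    (BV : LinearMap.BilinForm ℂ V) (BW : LinearMap.BilinForm ℂ W) :
    ADHMData V W BV BW → ℂ × ℂ × (W →ₗ[ℂ] V) :=
  fun p => (LinearMap.trace ℂ V p.val.1.1, LinearMap.trace ℂ V p.val.1.2, p.val.2.1)

/-!
On a two-dimensional symplectic space every self-adjoint `B` satisfies `ω(v, v) = 0` and
`ω(v, B v) = 0`; if `v` and `B v` were independent they would span `V`, forcing `v = 0` by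
nondegeneracy. So every vector is an eigenvector and `B = (tr B / 2) • 1`. Scalars commute, so the
ADHM equation reduces to `i i* = 0`, and `i*` is determined by `i` because the form on `W` is
nondegenerate.
-/

namespace LinearMap

variable {R M M₁ : Type*} [CommRing R] [AddCommGroup M] [Module R M] [AddCommGroup M₁]
  [Module R M₁]

lemma IsAdjointPair.right_unique {B : LinearMap.BilinForm R M} {B' : LinearMap.BilinForm R M₁}
    {f : M →ₗ[R] M₁} {g g' : M₁ →ₗ[R] M} (hB : B.SeparatingRight) (hg : IsAdjointPair B B' f g)
    (hg' : IsAdjointPair B B' f g') : g = g' := by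
  ext y
  rw [← sub_eq_zero]
  refine hB _ fun x => ?_
  rw [map_sub, ← hg, ← hg', sub_self]

end LinearMap

namespace LinearMap.BilinForm

variable {K V : Type*} [Field K] [CharZero K] [AddCommGroup V] [Module K V]
  {B : LinearMap.BilinForm K V}

lemma apply_self_eq_zero_of_antisymm (hB : ∀ u v, B u v = -B v u) (v : V) : B v v = 0 :=
  self_eq_neg.1 (hB v v)

lemma apply_apply_self_eq_zero_of_antisymm (hB : ∀ u v, B u v = -B v u) {f : Module.End K V}
    (hf : LinearMap.IsSelfAdjoint B f) (v : V) : B v (f v) = 0 :=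
  self_eq_neg.1 ((hB v (f v)).trans (congrArg Neg.neg (hf v v)))

lemma exists_eq_smul_one_of_isSelfAdjoint [FiniteDimensional K V] (hB : B.Nondegenerate)
    (hBanti : ∀ u v, B u v = -B v u) (hV : Module.finrank K V = 2) {f : Module.End K V}
    (hf : LinearMap.IsSelfAdjoint B f) : ∃ c : K, f = c • 1 := by
  refine exists_eq_smul_id_of_forall_notLinearIndependent fun v hli => hli.ne_zero 0 ?_
  have hspan : Submodule.span K (Set.range ![v, f v]) = ⊤ :=
    hli.span_eq_top_of_card_eq_finrank' (by simp [hV])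
  have hBv : B v = 0 := LinearMap.ext_on_range hspan fun i => by
    fin_cases i
    · simpa using apply_self_eq_zero_of_antisymm hBanti v
    · simpa using apply_apply_self_eq_zero_of_antisymm hBanti hf v
  exact hB.1 v fun y => by simp [hBv]

lemma eq_trace_div_two_smul_one_of_isSelfAdjoint [FiniteDimensional K V] (hB : B.Nondegenerate)
    (hBanti : ∀ u v, B u v = -B v u) (hV : Module.finrank K V = 2) {f : Module.End K V}
    (hf : LinearMap.IsSelfAdjoint B f) : f = (LinearMap.trace K V f / 2) • 1 := by
  obtain ⟨c, rfl⟩ := exists_eq_smul_one_of_isSelfAdjoint hB hBanti hV hf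
  simp [hV]

end LinearMap.BilinForm

theorem stmt2_general
    (V W : Type) [AddCommGroup V] [Module ℂ V] [FiniteDimensional ℂ V]
    [AddCommGroup W] [Module ℂ W]
    (BV : LinearMap.BilinForm ℂ V) (BW : LinearMap.BilinForm ℂ W)
    (hVnd : BV.Nondegenerate) (hWnd : BW.Nondegenerate)
    (hVsymp : ∀ u v : V, BV u v = -BV v u)
    (hV2 : Module.finrank ℂ V = 2) :
    Function.Injective (ADHMTraceMap V W BV BW) ∧
    Set.range (ADHMTraceMap V W BV BW) =
      {y : ℂ × ℂ × (W →ₗ[ℂ] V) | ∃ j : V →ₗ[ℂ] W,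
        (∀ (w : W) (v : V), BW w (j v) = BV (y.2.2 w) v) ∧ y.2.2 ∘ₗ j = 0} := by
  have hscalar {B : Module.End ℂ V} (hB : LinearMap.IsSelfAdjoint BV B) :
      B = (LinearMap.trace ℂ V B / 2) • 1 :=
    LinearMap.BilinForm.eq_trace_div_two_smul_one_of_isSelfAdjoint hVnd hVsymp hV2 hB
  refine ⟨?_, ?_⟩
  · rintro ⟨⟨⟨B₁, B₂⟩, i, j⟩, h₁, h₂, hj, _⟩ ⟨⟨⟨B₁', B₂'⟩, i', j'⟩, h₁', h₂', hj', _⟩ h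
    simp only [ADHMTraceMap, Prod.mk.injEq] at h
    obtain ⟨ht₁, ht₂, rfl⟩ := h
    have hB₁ : B₁ = B₁' := by rw [hscalar (B := B₁) h₁, hscalar (B := B₁') h₁', ht₁]
    have hB₂ : B₂ = B₂' := by rw [hscalar (B := B₂) h₂, hscalar (B := B₂') h₂', ht₂]
    have hj : j = j' := LinearMap.IsAdjointPair.right_unique hWnd.2
      (fun w v => (hj w v).symm) fun w v => (hj' w v).symm
    subst hB₁ hB₂ hj
    rfl
  · ext ⟨t₁, t₂, i⟩
    constructor
    · rintro ⟨⟨⟨⟨B₁, B₂⟩, i, j⟩, h₁, h₂, hj, hADHM⟩, h⟩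
      simp only [ADHMTraceMap, Prod.mk.injEq] at h
      obtain ⟨-, -, rfl⟩ := h
      have hcomm : Commute B₁ B₂ := by
        rw [hscalar (B := B₁) h₁]
        exact (Commute.one_left B₂).smul_left _
      exact ⟨j, hj, by simpa [hcomm.eq] using hADHM⟩
    · rintro ⟨j, hj, hij⟩
      refine ⟨⟨(((t₁ / 2) • 1, (t₂ / 2) • 1), i, j), by simp, by simp, hj,
        by simpa [smul_comm (t₁ / 2)] using hij⟩, ?_⟩
      simp [ADHMTraceMap, hV2]

/-- Let `V` be a 2-dimensional symplectic ℂ-vector space and `W` an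
orthogonal ℂ-vector space.  The map `(B₁,B₂,i) ↦ (tr B₁, tr B₂, i)` is a bijection
from `{(B₁,B₂,i) ∈ 𝔭(V)² × Hom(W,V) : [B₁,B₂] + i i* = 0}` onto
`ℂ² × {i : i i* = 0}`. -/
theorem stmt2
    (V W : Type) [AddCommGroup V] [Module ℂ V] [FiniteDimensional ℂ V]
    [AddCommGroup W] [Module ℂ W] [FiniteDimensional ℂ W]
    (BV : LinearMap.BilinForm ℂ V) (BW : LinearMap.BilinForm ℂ W)
    (hVnd : BV.Nondegenerate) (hWnd : BW.Nondegenerate)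
    (hVsymp : ∀ u v : V, BV u v = -BV v u)
    (hWorth : ∀ u v : W, BW u v = BW v u)
    (hV2 : Module.finrank ℂ V = 2) :
    Function.Injective (ADHMTraceMap V W BV BW) ∧
    Set.range (ADHMTraceMap V W BV BW) =
      {y : ℂ × ℂ × (W →ₗ[ℂ] V) | ∃ j : V →ₗ[ℂ] W,
        (∀ (w : W) (v : V), BW w (j v) = BV (y.2.2 w) v) ∧ y.2.2 ∘ₗ j = 0} :=
  stmt2_general V W BV BW hVnd hWnd hVsymp hV2
end

section
/- Let V be a 2-dimensional symplectic ℂ-vector space and W an orthogonal ℂ-vector space with dim W ≤ 3. Then every triple (B₁,B₂,i) ∈ 𝔭(V) × 𝔭(V) × Hom(W,V) satisfying [B₁,B₂] + ii* = 0 fails to be costable: there exists a nonzero subspace T ⊆ V with B₁T ⊆ T, B₂T ⊆ T and T ⊆ ker i*. (Hence the regular locus μ⁻¹(0)^{reg} is empty when k = 2 and N ≤ 3.) -/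
/-!
On a 2-dimensional symplectic space every line is Lagrangian, and a self-adjoint `B` satisfies
`(u, B u) = 0`, so `B u` lies on the line through `u`; hence `B₁, B₂` are scalars. The ADHM
equation then reduces to `i i* = 0`, i.e. `range i* ⊆ ker i`. As `ker i* = (range i)^⊥`,
the maps `i` and `i*` have equal rank `r`, so `2 r ≤ dim W ≤ 3` forces `r ≤ 1` and
`T = ker i*` is a nonzero subspace, invariant under the scalars `B₁, B₂`.
-/

open Module LinearMap

namespace LinearMap.BilinForm

variable {K V W : Type*} [Field K] [AddCommGroup V] [Module K V] [AddCommGroup W] [Module K W]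

lemma orthogonal_span_singleton_eq_of_finrank_eq_two {B : LinearMap.BilinForm K V}
    (hB : B.Nondegenerate) (hAlt : B.IsAlt) (hV : finrank K V = 2) {v : V} (hv : v ≠ 0) :
    B.orthogonal (K ∙ v) = K ∙ v := by
  have : FiniteDimensional K V := Module.finite_of_finrank_eq_succ hV
  have hle : K ∙ v ≤ B.orthogonal (K ∙ v) := by
    rw [Submodule.span_singleton_le_iff_mem, mem_orthogonal_iff]
    intro u hu
    obtain ⟨a, rfl⟩ := Submodule.mem_span_singleton.mp hu
    simp [hAlt.self_eq_zero]
  refine (Submodule.eq_of_le_of_finrank_eq hle ?_).symm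
  rw [finrank_orthogonal hB, hV, finrank_span_singleton hv]

lemma exists_eq_smul_one_of_isAlt_of_finrank_eq_two [NeZero (2 : K)]
    {B : LinearMap.BilinForm K V} (hB : B.Nondegenerate) (hAlt : B.IsAlt)
    (hV : finrank K V = 2) {f : Module.End K V} (hf : ∀ u v, B (f u) v = B u (f v)) :
    ∃ c : K, f = c • 1 := by
  refine LinearMap.exists_eq_smul_id_of_forall_notLinearIndependent fun v hli ↦ ?_
  have hv : v ≠ 0 := hli.ne_zero 0
  have hfv : B v (f v) = 0 := by
    have h2 : (2 : K) * B v (f v) = 0 := by linear_combination -hAlt.neg_eq v (f v) - hf v v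
    exact (mul_eq_zero.mp h2).resolve_left two_ne_zero
  have hmem : f v ∈ K ∙ v := by
    rw [← orthogonal_span_singleton_eq_of_finrank_eq_two hB hAlt hV hv, mem_orthogonal_iff]
    intro u hu
    obtain ⟨a, rfl⟩ := Submodule.mem_span_singleton.mp hu
    simp [hfv]
  obtain ⟨a, ha⟩ := Submodule.mem_span_singleton.mp hmem
  rw [LinearIndependent.pair_iff] at hli
  simpa using hli a (-1) (by rw [ha]; simp)

variable {BV : LinearMap.BilinForm K V} {BW : LinearMap.BilinForm K W}
  {i : W →ₗ[K] V} {j : V →ₗ[K] W}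

lemma ker_eq_orthogonal_range_of_adjoint (hW : BW.SeparatingRight)
    (hadj : ∀ w v, BW w (j v) = BV (i w) v) :
    ker j = BV.orthogonal (range i) := by
  ext v
  rw [mem_ker, mem_orthogonal_iff]
  constructor
  · rintro hv _ ⟨w, rfl⟩
    rw [← hadj, hv, map_zero]
  · exact fun h ↦ hW _ fun w ↦ by rw [hadj]; exact h _ ⟨w, rfl⟩

lemma finrank_ker_add_finrank_range_of_adjoint [FiniteDimensional K V]
    (hV : BV.Nondegenerate) (hW : BW.SeparatingRight) (hadj : ∀ w v, BW w (j v) = BV (i w) v) :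
    finrank K (ker j) + finrank K (range i) = finrank K V := by
  rw [ker_eq_orthogonal_range_of_adjoint hW hadj, finrank_orthogonal hV]
  have := Submodule.finrank_le (range i)
  omega

lemma two_mul_finrank_range_le_of_adjoint_of_comp_eq_zero [FiniteDimensional K V]
    [FiniteDimensional K W] (hV : BV.Nondegenerate) (hW : BW.SeparatingRight)
    (hadj : ∀ w v, BW w (j v) = BV (i w) v) (hij : i ∘ₗ j = 0) :
    2 * finrank K (range i) ≤ finrank K W := by
  have hrange : finrank K (range j) ≤ finrank K (ker i) :=
    Submodule.finrank_mono (range_le_ker_iff.mpr hij)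
  have hi := finrank_range_add_finrank_ker i
  have hj := finrank_range_add_finrank_ker j
  have hji := finrank_ker_add_finrank_range_of_adjoint hV hW hadj
  omega

end LinearMap.BilinForm

lemma Submodule.map_smul_one_le {K V : Type*} [CommSemiring K] [AddCommMonoid V] [Module K V]
    (T : Submodule K V) (c : K) : T.map (c • 1 : Module.End K V) ≤ T := by
  rintro _ ⟨x, hx, rfl⟩
  exact T.smul_mem c hx

theorem stmt5_general
    (V W : Type) [AddCommGroup V] [Module ℂ V]
    [AddCommGroup W] [Module ℂ W] [FiniteDimensional ℂ W]
    (BV : LinearMap.BilinForm ℂ V) (BW : LinearMap.BilinForm ℂ W)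
    (hVnd : BV.Nondegenerate) (hWnd : BW.Nondegenerate)
    (hVsymp : ∀ u v : V, BV u v = -BV v u)
    (hV2 : Module.finrank ℂ V = 2) (hW3 : Module.finrank ℂ W ≤ 3)
    (B₁ B₂ : Module.End ℂ V) (i : W →ₗ[ℂ] V) (j : V →ₗ[ℂ] W)
    (hB₁ : ∀ u v : V, BV (B₁ u) v = BV u (B₁ v))
    (hB₂ : ∀ u v : V, BV (B₂ u) v = BV u (B₂ v))
    (hadj : ∀ (w : W) (v : V), BW w (j v) = BV (i w) v)
    (hADHM : B₁ * B₂ - B₂ * B₁ + i ∘ₗ j = 0) :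
    ∃ T : Submodule ℂ V, T ≠ ⊥ ∧ T.map B₁ ≤ T ∧ T.map B₂ ≤ T ∧
      T ≤ LinearMap.ker j := by
  have : FiniteDimensional ℂ V := Module.finite_of_finrank_eq_succ hV2
  have hAlt : BV.IsAlt := fun u ↦ CharZero.eq_neg_self_iff.mp (hVsymp u u)
  obtain ⟨c₁, rfl⟩ :=
    LinearMap.BilinForm.exists_eq_smul_one_of_isAlt_of_finrank_eq_two hVnd hAlt hV2 hB₁
  obtain ⟨c₂, rfl⟩ :=
    LinearMap.BilinForm.exists_eq_smul_one_of_isAlt_of_finrank_eq_two hVnd hAlt hV2 hB₂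
  have hij : i ∘ₗ j = 0 := by
    rwa [((Commute.one_left _).smul_left c₁).eq, sub_self, zero_add] at hADHM
  have hrank := LinearMap.BilinForm.two_mul_finrank_range_le_of_adjoint_of_comp_eq_zero
    hVnd hWnd.2 hadj hij
  have hker := LinearMap.BilinForm.finrank_ker_add_finrank_range_of_adjoint hVnd hWnd.2 hadj
  refine ⟨ker j, ?_, Submodule.map_smul_one_le _ c₁, Submodule.map_smul_one_le _ c₂, le_rfl⟩
  intro hbot
  rw [hbot, finrank_bot] at hker
  omega

/-- Let `V` be a 2-dimensional symplectic ℂ-vector space and `W` an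
orthogonal ℂ-vector space with `dim W ≤ 3`.  Every ADHM datum `(B₁, B₂, i)` (with
`j = i*` the adjoint of `i`) satisfying `[B₁,B₂] + i i* = 0` fails to be costable:
there is a nonzero subspace `T ⊆ V` with `B₁ T ⊆ T`, `B₂ T ⊆ T` and `T ⊆ ker i*`. -/
theorem stmt5
    (V W : Type) [AddCommGroup V] [Module ℂ V] [FiniteDimensional ℂ V]
    [AddCommGroup W] [Module ℂ W] [FiniteDimensional ℂ W]
    (BV : LinearMap.BilinForm ℂ V) (BW : LinearMap.BilinForm ℂ W)
    (hVnd : BV.Nondegenerate) (hWnd : BW.Nondegenerate)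
    (hVsymp : ∀ u v : V, BV u v = -BV v u)
    (hWorth : ∀ u v : W, BW u v = BW v u)
    (hV2 : Module.finrank ℂ V = 2) (hW3 : Module.finrank ℂ W ≤ 3)
    (B₁ B₂ : Module.End ℂ V) (i : W →ₗ[ℂ] V) (j : V →ₗ[ℂ] W)
    (hB₁ : ∀ u v : V, BV (B₁ u) v = BV u (B₁ v))
    (hB₂ : ∀ u v : V, BV (B₂ u) v = BV u (B₂ v))
    (hadj : ∀ (w : W) (v : V), BW w (j v) = BV (i w) v)
    (hADHM : B₁ * B₂ - B₂ * B₁ + i ∘ₗ j = 0) :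
    ∃ T : Submodule ℂ V, T ≠ ⊥ ∧ T.map B₁ ≤ T ∧ T.map B₂ ≤ T ∧
      T ≤ LinearMap.ker j :=
  stmt5_general V W BV BW hVnd hWnd hVsymp hV2 hW3 B₁ B₂ i j hB₁ hB₂ hadj hADHM
end

section
/- Let V be a 4-dimensional symplectic ℂ-vector space and W a 2-dimensional orthogonal ℂ-vector space. Then every triple (B₁,B₂,i) ∈ 𝔭(V) × 𝔭(V) × Hom(W,V) satisfying [B₁,B₂] + ii* = 0 fails to be costable: there exists a nonzero subspace T ⊆ V with B₁T ⊆ T, B₂T ⊆ T and T ⊆ ker i*. (Hence the regular locus μ⁻¹(0)^{reg} is empty when N = 2 and k = 4.) -/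
/-!
Take isotropic vectors `w₊, w₋ ∈ W` with `BW w₋ w₊ = 1`, and for `w ∈ {w₊, w₋}` let `S_w`
be the span of all `E (i w)`, `E` a word in `B₁, B₂`. Modulo the two-sided ideal generated
by `[B₁, B₂] = -i j`, a word equals its reverse, which is its `BV`-adjoint; since `BV` is
skew, `BW w (j E i w)` changes sign under reversal, and induction on the length shows that
`j E i w ∈ ℂ w` for every word `E`. Hence `S_w` is isotropic, so `dim S_w ≤ 2`.

If `S_{w₊} + S_{w₋} ≠ V`, its orthogonal `T` is nonzero, invariant under the self-adjoint
`Bₖ`, and contained in `ker j` because it is orthogonal to `i W`. Otherwise `S_{w₊}` is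
Lagrangian and on it `[B₁, B₂] = -φ ⊗ i w₊` with `φ = BV (i w₋)`. The traces of
`[B₁, B₂]`, `[B₁, B₂] B₁` and `[B₁, B₂] B₂` on `S_{w₊}` vanish, so `φ` kills `i w₊`,
`B₁ i w₊` and `B₂ i w₊`; as `S_{w₊}` is 2-dimensional and generated by `i w₊`, `φ` vanishes
on it. Then `i w₋ ∈ S_{w₊}^⊥ = S_{w₊}`, so `S_{w₊} = V`, which is absurd.
-/

open Module LinearMap

section Words

variable {R : Type*} [Ring R] (x y : R)

def wordProd (Z : List Bool) : R := (Z.map (cond · y x)).prod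

@[simp] lemma wordProd_nil : wordProd x y [] = 1 := rfl

@[simp] lemma wordProd_cons (b : Bool) (Z : List Bool) :
    wordProd x y (b :: Z) = cond b y x * wordProd x y Z := rfl

@[simp] lemma wordProd_append (Z Z' : List Bool) :
    wordProd x y (Z ++ Z') = wordProd x y Z * wordProd x y Z' := by
  simp [wordProd]

def wordCommutatorSpan (d : ℕ) : AddSubgroup R :=
  AddSubgroup.closure {z | ∃ A B : List Bool, A.length + B.length + 2 ≤ d ∧
    z = wordProd x y A * (x * y - y * x) * wordProd x y B}

variable {x y}

lemma cond_mul_mem_wordCommutatorSpan (b : Bool) {d : ℕ} {z : R}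
    (hz : z ∈ wordCommutatorSpan x y d) :
    cond b y x * z ∈ wordCommutatorSpan x y (d + 1) := by
  suffices wordCommutatorSpan x y d ≤
      (wordCommutatorSpan x y (d + 1)).comap (AddMonoidHom.mulLeft (cond b y x)) from this hz
  refine (AddSubgroup.closure_le _).2 ?_
  rintro _ ⟨A, B, hAB, rfl⟩
  exact AddSubgroup.subset_closure ⟨b :: A, B, by simp; omega, by simp [mul_assoc]⟩

lemma commutator_cond_mem_zmultiples (a b : Bool) :
    cond a y x * cond b y x - cond b y x * cond a y x ∈
      AddSubgroup.zmultiples (x * y - y * x) := by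
  cases a <;> cases b
  · exact ⟨0, by simp⟩
  · exact ⟨1, by simp⟩
  · exact ⟨-1, by simp⟩
  · exact ⟨0, by simp⟩

lemma commutator_cond_wordProd_mem (a : Bool) (Z : List Bool) :
    cond a y x * wordProd x y Z - wordProd x y Z * cond a y x ∈
      wordCommutatorSpan x y (Z.length + 1) := by
  induction Z with
  | nil => simp
  | cons b Z ih =>
    obtain ⟨k, hk : k • (x * y - y * x) = _⟩ :=
      commutator_cond_mem_zmultiples (x := x) (y := y) a b
    have hsplit : cond a y x * wordProd x y (b :: Z) - wordProd x y (b :: Z) * cond a y x =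
        cond b y x * (cond a y x * wordProd x y Z - wordProd x y Z * cond a y x) +
          k • (wordProd x y [] * (x * y - y * x) * wordProd x y Z) := by
      rw [wordProd_nil, one_mul, ← smul_mul_assoc, hk, wordProd_cons]
      noncomm_ring
    rw [hsplit]
    refine add_mem (cond_mul_mem_wordCommutatorSpan b ih) (zsmul_mem ?_ k)
    exact AddSubgroup.subset_closure ⟨[], Z, by simp, rfl⟩

lemma wordProd_sub_wordProd_reverse_mem (Z : List Bool) :
    wordProd x y Z - wordProd x y Z.reverse ∈ wordCommutatorSpan x y Z.length := by
  induction Z with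
  | nil => simp
  | cons a Z ih =>
    have hsplit : wordProd x y (a :: Z) - wordProd x y (a :: Z).reverse =
        cond a y x * (wordProd x y Z - wordProd x y Z.reverse) +
          (cond a y x * wordProd x y Z.reverse - wordProd x y Z.reverse * cond a y x) := by
      simp only [wordProd_cons, List.reverse_cons, wordProd_append, wordProd_nil, mul_one]
      noncomm_ring
    rw [hsplit]
    refine add_mem (cond_mul_mem_wordCommutatorSpan a ih) ?_
    simpa using commutator_cond_wordProd_mem a Z.reverse

end Words

section CyclicSpan

variable {K M : Type*} [Field K] [AddCommGroup M] [Module K M]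

lemma isAdjointPair_wordProd {B : LinearMap.BilinForm K M} {x y : Module.End K M}
    (hx : IsAdjointPair B B x x) (hy : IsAdjointPair B B y y) (Z : List Bool) :
    IsAdjointPair B B ⇑(wordProd x y Z) ⇑(wordProd x y Z.reverse) := by
  induction Z with
  | nil => exact isAdjointPair_one
  | cons b Z ih =>
    have hb : IsAdjointPair B B ⇑(cond b y x) ⇑(cond b y x) := by cases b <;> assumption
    simpa using hb.mul ih

def cyclicSpan (x y : Module.End K M) (v : M) : Submodule K M :=
  Submodule.span K (Set.range fun Z => wordProd x y Z v)

variable {x y : Module.End K M} {v : M}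

lemma mem_cyclicSpan_self : v ∈ cyclicSpan x y v :=
  Submodule.subset_span ⟨[], rfl⟩

lemma map_cyclicSpan_le (b : Bool) :
    (cyclicSpan x y v).map (cond b y x) ≤ cyclicSpan x y v := by
  rw [cyclicSpan, Submodule.map_span, Submodule.span_le]
  rintro _ ⟨_, ⟨Z, rfl⟩, rfl⟩
  exact Submodule.subset_span ⟨b :: Z, rfl⟩

lemma cyclicSpan_le {P : Submodule K M} (hv : v ∈ P) (hx : P.map x ≤ P) (hy : P.map y ≤ P) :
    cyclicSpan x y v ≤ P := by
  rw [cyclicSpan, Submodule.span_le]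
  rintro _ ⟨Z, rfl⟩
  induction Z with
  | nil => exact hv
  | cons b Z ih =>
    cases b
    · exact hx (Submodule.mem_map_of_mem ih)
    · exact hy (Submodule.mem_map_of_mem ih)

lemma map_span_singleton_le_of_mem {f : Module.End K M} (hf : f v ∈ K ∙ v) :
    (K ∙ v).map f ≤ K ∙ v := by
  rw [Submodule.map_span, Set.image_singleton, Submodule.span_singleton_le_iff_mem]
  exact hf

variable [FiniteDimensional K M]

lemma apply_eq_zero_of_commutator_eq_smulRight {X Y : Module.End K M} {φ : M →ₗ[K] K}
    (h : X * Y - Y * X = φ.smulRight v) : φ v = 0 ∧ φ (X v) = 0 ∧ φ (Y v) = 0 := by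
  have htrace : ∀ Z : Module.End K M, trace K M ((X * Y - Y * X) * Z) = φ (Z v) := by
    intro Z
    have hZ : φ.smulRight v * Z = (φ ∘ₗ Z).smulRight v := by ext; simp
    rw [h, hZ, trace_smulRight, comp_apply]
  refine ⟨?_, ?_, ?_⟩
  · rw [← Module.End.one_apply (R := K) v, ← htrace, mul_one, map_sub, trace_mul_comm K X,
      sub_self]
  · rw [← htrace, sub_mul, map_sub, mul_assoc, trace_mul_comm K X, sub_self]
  · rw [← htrace, sub_mul, map_sub, mul_assoc Y, trace_mul_comm K Y, mul_assoc, sub_self]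

lemma cyclicSpan_le_ker_of_commutator_eq_smulRight {φ : M →ₗ[K] K}
    (hdim : finrank K (cyclicSpan x y v) = 2)
    (hcomm : ∀ u ∈ cyclicSpan x y v, (x * y - y * x) u = φ u • v) :
    cyclicSpan x y v ≤ ker φ := by
  set P := cyclicSpan x y v
  have hxP : ∀ u ∈ P, x u ∈ P := fun u hu => map_cyclicSpan_le false (Submodule.mem_map_of_mem hu)
  have hyP : ∀ u ∈ P, y u ∈ P := fun u hu => map_cyclicSpan_le true (Submodule.mem_map_of_mem hu)
  obtain ⟨hv, hxv, hyv⟩ := apply_eq_zero_of_commutator_eq_smulRight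
    (X := x.restrict hxP) (Y := y.restrict hyP) (φ := φ.domRestrict P)
    (v := ⟨v, mem_cyclicSpan_self⟩) (by ext ⟨u, hu⟩; simpa using hcomm u hu)
  simp only [domRestrict_apply, restrict_apply] at hv hxv hyv
  by_contra hle
  have hv₀ : v ≠ 0 := by
    rintro rfl
    have hbot : P ≤ ⊥ := cyclicSpan_le (Submodule.zero_mem ⊥) (by simp) (by simp)
    rw [le_bot_iff.1 hbot, finrank_bot] at hdim
    exact absurd hdim (by norm_num)
  have hline : K ∙ v = P ⊓ ker φ := by
    refine Submodule.eq_of_le_of_finrank_le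
      ((Submodule.span_singleton_le_iff_mem _ _).2 ⟨mem_cyclicSpan_self, hv⟩) ?_
    have := Submodule.finrank_lt_finrank_of_lt (inf_lt_left.2 hle)
    rw [finrank_span_singleton hv₀]
    omega
  have hPv : P ≤ K ∙ v := cyclicSpan_le (Submodule.mem_span_singleton_self v)
    (map_span_singleton_le_of_mem (hline ▸ ⟨hxP v mem_cyclicSpan_self, hxv⟩))
    (map_span_singleton_le_of_mem (hline ▸ ⟨hyP v mem_cyclicSpan_self, hyv⟩))
  have := Submodule.finrank_mono hPv
  rw [finrank_span_singleton hv₀] at this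
  omega

end CyclicSpan

namespace LinearMap.BilinForm

variable {K M : Type*} [Field K] [AddCommGroup M] [Module K M] {B : LinearMap.BilinForm K M}

lemma mem_orthogonal_span_singleton_iff {w x : M} :
    x ∈ B.orthogonal (K ∙ w) ↔ B w x = 0 := by
  refine ⟨fun h => h w (Submodule.mem_span_singleton_self w), fun h n hn => ?_⟩
  obtain ⟨c, rfl⟩ := Submodule.mem_span_singleton.1 hn
  simp [h]

lemma eq_smul_of_mem_span_singleton {w w' x : M} (h : B w' w = 1) (hx : x ∈ K ∙ w) :
    x = B w' x • w := by
  obtain ⟨c, rfl⟩ := Submodule.mem_span_singleton.1 hx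
  simp [h]

lemma span_le_orthogonal_span {s : Set M} (h : ∀ a ∈ s, ∀ b ∈ s, B a b = 0) :
    Submodule.span K s ≤ B.orthogonal (Submodule.span K s) := by
  refine Submodule.span_le.2 fun b hb n hn => ?_
  change n ∈ ker (B.flip b)
  exact Submodule.span_le.2 (fun a ha => h a ha b hb) hn

lemma map_orthogonal_le {f : Module.End K M} (hf : IsAdjointPair B B f f) {P : Submodule K M}
    (hP : P.map f ≤ P) : (B.orthogonal P).map f ≤ B.orthogonal P := by
  rintro _ ⟨v, hv, rfl⟩ n hn
  rw [← hf n v]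
  exact hv (f n) (hP (Submodule.mem_map_of_mem hn))

lemma exists_isotropic_dual [NeZero (2 : K)] (hB : B.IsSymm) (hnd : B.Nondegenerate) {w : M}
    (hw₀ : w ≠ 0) (hw : B w w = 0) : ∃ w', B w' w' = 0 ∧ B w' w = 1 := by
  obtain ⟨z, hz⟩ : ∃ z, B w z ≠ 0 := by
    by_contra! h
    exact hw₀ (hnd.1 w h)
  set z' := (B w z)⁻¹ • z
  have hz'w : B z' w = 1 := by
    rw [← hB.eq]
    simp [z', hz]
  have hwz' : B w z' = 1 := by rw [← hB.eq, hz'w]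
  refine ⟨z' - (B z' z' / 2) • w, ?_, by simp [hz'w, hw]⟩
  simp only [map_sub, map_smul, LinearMap.sub_apply, LinearMap.smul_apply, smul_eq_mul, hz'w,
    hwz', hw]
  field_simp
  ring

variable [FiniteDimensional K M]

lemma exists_ne_zero_isotropic [IsAlgClosed K] [Invertible (2 : K)] (hB : B.IsSymm)
    (hM : 2 ≤ finrank K M) : ∃ w ≠ 0, B w w = 0 := by
  obtain ⟨e, he⟩ := exists_orthogonal_basis (isSymm_iff.1 hB)
  set i₀ : Fin (finrank K M) := ⟨0, by omega⟩
  set i₁ : Fin (finrank K M) := ⟨1, by omega⟩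
  have h₀₁ : i₀ ≠ i₁ := by simp [i₀, i₁, Fin.ext_iff]
  by_cases hb : B (e i₁) (e i₁) = 0
  · exact ⟨e i₁, e.ne_zero i₁, hb⟩
  obtain ⟨t, ht⟩ := IsAlgClosed.exists_eq_mul_self (-(B (e i₀) (e i₀) / B (e i₁) (e i₁)))
  refine ⟨e i₀ + t • e i₁, fun h => by simpa [h₀₁] using congr_arg (e.repr · i₀) h, ?_⟩
  have htb : t * t * B (e i₁) (e i₁) = -B (e i₀) (e i₀) := by
    rw [← ht]
    field_simp
  simp only [map_add, map_smul, LinearMap.add_apply, LinearMap.smul_apply, smul_eq_mul, he h₀₁,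
    he h₀₁.symm]
  linear_combination htb

lemma orthogonal_span_singleton_eq_self (hnd : B.Nondegenerate) (hM : finrank K M = 2) {w : M}
    (hw₀ : w ≠ 0) (hw : B w w = 0) : B.orthogonal (K ∙ w) = K ∙ w := by
  refine (Submodule.eq_of_le_of_finrank_le ?_ ?_).symm
  · intro x hx
    obtain ⟨c, rfl⟩ := Submodule.mem_span_singleton.1 hx
    rw [mem_orthogonal_span_singleton_iff, map_smul, hw, smul_zero]
  · rw [finrank_orthogonal hnd, finrank_span_singleton hw₀, hM]

lemma two_mul_finrank_le_of_le_orthogonal (hB : B.Nondegenerate) {P : Submodule K M}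
    (hP : P ≤ B.orthogonal P) : 2 * finrank K P ≤ finrank K M := by
  have hle := Submodule.finrank_mono hP
  rw [finrank_orthogonal hB] at hle
  have := P.finrank_le
  omega

lemma orthogonal_ne_bot (hB : B.Nondegenerate) {P : Submodule K M} (hP : P ≠ ⊤) :
    B.orthogonal P ≠ ⊥ := by
  intro h
  have hdim := finrank_orthogonal hB P
  rw [h, finrank_bot] at hdim
  have := Submodule.finrank_lt hP
  omega

end LinearMap.BilinForm

section ADHM

variable {K V W : Type*} [Field K] [AddCommGroup V] [Module K V] [AddCommGroup W] [Module K W]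

structure IsADHMSolution (BV : LinearMap.BilinForm K V) (BW : LinearMap.BilinForm K W)
    (B₁ B₂ : Module.End K V) (i : W →ₗ[K] V) (j : V →ₗ[K] W) : Prop where
  skew : ∀ u v, BV u v = -BV v u
  selfAdjoint₁ : IsAdjointPair BV BV B₁ B₁
  selfAdjoint₂ : IsAdjointPair BV BV B₂ B₂
  adjoint : ∀ w v, BW w (j v) = BV (i w) v
  moment : B₁ * B₂ - B₂ * B₁ + i ∘ₗ j = 0

variable {BV : LinearMap.BilinForm K V} {BW : LinearMap.BilinForm K W}
  {B₁ B₂ : Module.End K V} {i : W →ₗ[K] V} {j : V →ₗ[K] W} [NeZero (2 : K)]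

lemma IsADHMSolution.apply_wordProd_mem_span_singleton (h : IsADHMSolution BV BW B₁ B₂ i j)
    {w : W} (hw : BW.orthogonal (K ∙ w) = K ∙ w) (Z : List Bool) :
    j (wordProd B₁ B₂ Z (i w)) ∈ K ∙ w := by
  induction hn : Z.length using Nat.strong_induction_on generalizing Z with
  | _ n ih =>
  have hspan : wordCommutatorSpan B₁ B₂ n ≤
      ((K ∙ w).comap (j ∘ₗ applyₗ (i w))).toAddSubgroup := by
    refine (AddSubgroup.closure_le _).2 ?_
    rintro _ ⟨A, B, hAB, rfl⟩
    obtain ⟨c, hc⟩ := Submodule.mem_span_singleton.1 (ih B.length (by omega) B rfl)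
    have hgen : j ((wordProd B₁ B₂ A * (B₁ * B₂ - B₂ * B₁) * wordProd B₁ B₂ B) (i w)) =
        -c • j (wordProd B₁ B₂ A (i w)) := by
      simp [eq_neg_of_add_eq_zero_left h.moment, ← hc]
    change j ((wordProd B₁ B₂ A * (B₁ * B₂ - B₂ * B₁) * wordProd B₁ B₂ B) (i w)) ∈ K ∙ w
    rw [hgen]
    exact Submodule.smul_mem _ _ (ih A.length (by omega) A rfl)
  have hdiff : j ((wordProd B₁ B₂ Z - wordProd B₁ B₂ Z.reverse) (i w)) ∈ K ∙ w :=
    hspan (hn ▸ wordProd_sub_wordProd_reverse_mem Z)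
  have hreverse : BW w (j (wordProd B₁ B₂ Z (i w))) =
      -BW w (j (wordProd B₁ B₂ Z.reverse (i w))) := by
    rw [h.adjoint, h.adjoint, h.skew, isAdjointPair_wordProd h.selfAdjoint₁ h.selfAdjoint₂ Z]
  rw [← hw, BilinForm.mem_orthogonal_span_singleton_iff] at hdiff ⊢
  rw [LinearMap.sub_apply, map_sub, map_sub] at hdiff
  have htwice : (2 : K) * BW w (j (wordProd B₁ B₂ Z (i w))) = 0 := by
    linear_combination hdiff + hreverse
  exact (mul_eq_zero.1 htwice).resolve_left two_ne_zero

lemma IsADHMSolution.cyclicSpan_le_orthogonal (h : IsADHMSolution BV BW B₁ B₂ i j) {w : W}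
    (hw : BW.orthogonal (K ∙ w) = K ∙ w) :
    cyclicSpan B₁ B₂ (i w) ≤ BV.orthogonal (cyclicSpan B₁ B₂ (i w)) := by
  refine BilinForm.span_le_orthogonal_span ?_
  rintro _ ⟨A, rfl⟩ _ ⟨B, rfl⟩
  have hmem := h.apply_wordProd_mem_span_singleton hw (A.reverse ++ B)
  rw [← hw, BilinForm.mem_orthogonal_span_singleton_iff, h.adjoint] at hmem
  simpa [isAdjointPair_wordProd h.selfAdjoint₁ h.selfAdjoint₂ A _ _] using hmem

lemma IsADHMSolution.commutator_apply_of_mem_cyclicSpan (h : IsADHMSolution BV BW B₁ B₂ i j)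
    {wp wm : W} (hp : BW.orthogonal (K ∙ wp) = K ∙ wp) (hmp : BW wm wp = 1)
    {v : V} (hv : v ∈ cyclicSpan B₁ B₂ (i wp)) :
    (B₁ * B₂ - B₂ * B₁) v = (-BV (i wm)) v • i wp := by
  have hjv : j v ∈ K ∙ wp := by
    rw [← hp, BilinForm.mem_orthogonal_span_singleton_iff, h.adjoint]
    exact h.cyclicSpan_le_orthogonal hp hv _ mem_cyclicSpan_self
  rw [eq_neg_of_add_eq_zero_left h.moment, LinearMap.neg_apply, comp_apply,
    BilinForm.eq_smul_of_mem_span_singleton hmp hjv, map_smul, h.adjoint, LinearMap.neg_apply,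
    neg_smul]

lemma IsADHMSolution.sup_cyclicSpan_ne_top [FiniteDimensional K V]
    (h : IsADHMSolution BV BW B₁ B₂ i j) (hVnd : BV.Nondegenerate) (hV : finrank K V = 4)
    {wp wm : W} (hp : BW.orthogonal (K ∙ wp) = K ∙ wp) (hm : BW.orthogonal (K ∙ wm) = K ∙ wm)
    (hmp : BW wm wp = 1) :
    cyclicSpan B₁ B₂ (i wp) ⊔ cyclicSpan B₁ B₂ (i wm) ≠ ⊤ := by
  set Sp := cyclicSpan B₁ B₂ (i wp)
  set Sm := cyclicSpan B₁ B₂ (i wm)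
  intro htop
  have hSp : Sp ≤ BV.orthogonal Sp := h.cyclicSpan_le_orthogonal hp
  have hdimp : 2 * finrank K Sp ≤ finrank K V :=
    BilinForm.two_mul_finrank_le_of_le_orthogonal hVnd hSp
  have hdimm : 2 * finrank K Sm ≤ finrank K V :=
    BilinForm.two_mul_finrank_le_of_le_orthogonal hVnd (h.cyclicSpan_le_orthogonal hm)
  have hsum := Submodule.finrank_add_le_finrank_add_finrank Sp Sm
  rw [htop, finrank_top] at hsum
  have hLagrangian : BV.orthogonal Sp = Sp := by
    refine (Submodule.eq_of_le_of_finrank_le hSp ?_).symm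
    rw [BilinForm.finrank_orthogonal hVnd]
    omega
  have hφ : Sp ≤ ker (-BV (i wm)) :=
    cyclicSpan_le_ker_of_commutator_eq_smulRight (show finrank K Sp = 2 by omega)
      fun v hv => h.commutator_apply_of_mem_cyclicSpan hp hmp hv
  have hiwm : i wm ∈ Sp := by
    rw [← hLagrangian]
    intro n hn
    rw [h.skew, neg_eq_zero, ← neg_eq_zero, ← LinearMap.neg_apply]
    exact hφ hn
  have hSmp : Sm ≤ Sp := cyclicSpan_le hiwm (map_cyclicSpan_le false) (map_cyclicSpan_le true)
  rw [sup_eq_left.2 hSmp] at htop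
  rw [htop, finrank_top] at hdimp
  omega

end ADHM

/-- Let `V` be a 4-dimensional symplectic ℂ-vector space and `W` a
2-dimensional orthogonal ℂ-vector space.  Every triple `(B₁, B₂, i)` (with `j = i*`)
satisfying `[B₁,B₂] + i i* = 0` fails to be costable. -/
theorem stmt7
    (V W : Type) [AddCommGroup V] [Module ℂ V] [FiniteDimensional ℂ V]
    [AddCommGroup W] [Module ℂ W] [FiniteDimensional ℂ W]
    (BV : LinearMap.BilinForm ℂ V) (BW : LinearMap.BilinForm ℂ W)
    (hVnd : BV.Nondegenerate) (hWnd : BW.Nondegenerate)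
    (hVsymp : ∀ u v : V, BV u v = -BV v u)
    (hWorth : ∀ u v : W, BW u v = BW v u)
    (hV4 : Module.finrank ℂ V = 4) (hW2 : Module.finrank ℂ W = 2)
    (B₁ B₂ : Module.End ℂ V) (i : W →ₗ[ℂ] V) (j : V →ₗ[ℂ] W)
    (hB₁ : ∀ u v : V, BV (B₁ u) v = BV u (B₁ v))
    (hB₂ : ∀ u v : V, BV (B₂ u) v = BV u (B₂ v))
    (hadj : ∀ (w : W) (v : V), BW w (j v) = BV (i w) v)
    (hADHM : B₁ * B₂ - B₂ * B₁ + i ∘ₗ j = 0) :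
    ∃ T : Submodule ℂ V, T ≠ ⊥ ∧ T.map B₁ ≤ T ∧ T.map B₂ ≤ T ∧
      T ≤ LinearMap.ker j := by
  have h : IsADHMSolution BV BW B₁ B₂ i j := ⟨hVsymp, hB₁, hB₂, hadj, hADHM⟩
  obtain ⟨wp, hwp₀, hwp⟩ := BilinForm.exists_ne_zero_isotropic ⟨hWorth⟩ hW2.ge
  obtain ⟨wm, hwm, hmp⟩ := BilinForm.exists_isotropic_dual ⟨hWorth⟩ hWnd hwp₀ hwp
  have hwm₀ : wm ≠ 0 := by
    rintro rfl
    simp at hmp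
  have hp := BilinForm.orthogonal_span_singleton_eq_self hWnd hW2 hwp₀ hwp
  have hm := BilinForm.orthogonal_span_singleton_eq_self hWnd hW2 hwm₀ hwm
  set S := cyclicSpan B₁ B₂ (i wp) ⊔ cyclicSpan B₁ B₂ (i wm)
  have hS : ∀ b, S.map (cond b B₂ B₁) ≤ S := fun b => by
    rw [Submodule.map_sup]
    exact sup_le_sup (map_cyclicSpan_le b) (map_cyclicSpan_le b)
  refine ⟨BV.orthogonal S,
    BilinForm.orthogonal_ne_bot hVnd (h.sup_cyclicSpan_ne_top hVnd hV4 hp hm hmp),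
    BilinForm.map_orthogonal_le hB₁ (hS false), BilinForm.map_orthogonal_le hB₂ (hS true),
    fun v hv => ?_⟩
  have hjv : j v ∈ ℂ ∙ wp := by
    rw [← hp, BilinForm.mem_orthogonal_span_singleton_iff, hadj]
    exact hv _ (Submodule.mem_sup_left mem_cyclicSpan_self)
  rw [LinearMap.mem_ker, BilinForm.eq_smul_of_mem_span_singleton hmp hjv, hadj,
    hv _ (Submodule.mem_sup_right mem_cyclicSpan_self), zero_smul]
end

section
/- Let V be a 4-dimensional symplectic ℂ-vector space and W a 2-dimensional orthogonal ℂ-vector space. If B₁, B₂ are trace-free self-adjoint endomorphisms of V and i ∈ Hom(W,V) satisfies [B₁,B₂] + ii* = 0, then (ii*)² = 0 and i*i = 0. -/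
/-!
In a Darboux basis of the 4-dimensional symplectic space `V`, a trace-free self-adjoint
endomorphism has the shape `!![a, 0, d, e; 0, a, b, c; c, -e, -a, 0; -b, d, 0, -a]` and therefore
squares to a scalar. Polarising, `B₁ B₂ + B₂ B₁` is a scalar as well, and the Clifford-algebra
identity `(xy - yx)² = (xy + yx)² - 4 x² y²` makes `[B₁, B₂]² = (i i*)²` a scalar `c`. As `(i i*)²`
factors through the 2-dimensional `W`, `c = 0`.

Then `X = i* i` satisfies `X³ = i* (i i*)² i = 0`, so `X² = 0` because `dim W = 2`. `X` is
skew-adjoint for the orthogonal form, so `X u` is orthogonal to both `u` and `X u`; if `X u ≠ 0`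
these two vectors span `W`, contradicting nondegeneracy.
-/

open Module Matrix LinearMap

theorem commutator_mul_self_eq_smul_one {R A : Type*} [CommRing R] [Ring A] [Algebra R A]
    {x y : A} {a b c : R} (hx : x * x = a • 1) (hy : y * y = b • 1)
    (hxy : (x + y) * (x + y) = c • 1) :
    (x * y - y * x) * (x * y - y * x) = ((c - a - b) ^ 2 - 4 * a * b) • 1 := by
  simp only [← Algebra.algebraMap_eq_smul_one] at *
  set t := algebraMap R A (c - a - b) with ht
  clear_value t
  have htc : ∀ z, z * t = t * z := fun z => by rw [ht, Algebra.commutes]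
  have hyx : y * x = t - x * y := by
    rw [ht, map_sub, map_sub, ← hxy, ← hx, ← hy]; noncomm_ring
  have hsq : x * y * (x * y) = t * (x * y) - algebraMap R A (a * b) := by
    calc x * y * (x * y) = x * (y * x) * y := by noncomm_ring
    _ = x * t * y - x * x * (y * y) := by rw [hyx]; noncomm_ring
    _ = t * (x * y) - algebraMap R A (a * b) := by rw [hx, hy, ← map_mul, htc, mul_assoc]
  calc (x * y - y * x) * (x * y - y * x)
      = 4 * (x * y * (x * y)) - 2 * (t * (x * y)) - 2 * (x * y * t) + t * t := by
        rw [hyx]; noncomm_ring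
  _ = t * t - 4 * algebraMap R A (a * b) := by rw [hsq, htc]; noncomm_ring
  _ = algebraMap R A ((c - a - b) ^ 2 - 4 * a * b) := by
        rw [ht, ← map_mul, ← map_ofNat (algebraMap R A) 4, ← map_mul, ← map_sub]
        ring_nf

theorem eq_zero_of_smul_one_eq_comp {K V W : Type*} [Field K] [AddCommGroup V] [Module K V]
    [AddCommGroup W] [Module K W] [FiniteDimensional K W] {c : K} {f : W →ₗ[K] V}
    {g : V →ₗ[K] W} (hlt : finrank K W < finrank K V) (h : c • (1 : End K V) = f ∘ₗ g) :
    c = 0 := by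
  by_contra hc
  have hinj : Function.Injective g := by
    refine (injective_iff_map_eq_zero g).mpr fun v hv => ?_
    have : c • v = 0 := by simpa [hv] using congr($h v)
    exact (smul_eq_zero.mp this).resolve_left hc
  exact hlt.not_ge (LinearMap.finrank_le_finrank_of_injective hinj)

theorem LinearMap.SeparatingLeft.exists_eq_one {K M N : Type*} [Field K] [AddCommGroup M]
    [Module K M] [AddCommGroup N] [Module K N] {B : M →ₗ[K] N →ₗ[K] K} (hB : B.SeparatingLeft)
    {x : M} (hx : x ≠ 0) : ∃ y, B x y = 1 := by
  obtain ⟨y, hy⟩ : ∃ y, B x y ≠ 0 := by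
    by_contra! h
    exact hx (hB x h)
  exact ⟨(B x y)⁻¹ • y, by rw [map_smul, smul_eq_mul, inv_mul_cancel₀ hy]⟩

theorem linearIndependent_of_det_ne_zero {R M N ι : Type*} [CommRing R] [IsDomain R]
    [AddCommGroup M] [Module R M] [AddCommGroup N] [Module R N] [Fintype ι] [DecidableEq ι]
    (B : M →ₗ[R] N →ₗ[R] R) {v : ι → M} {w : ι → N}
    (h : (Matrix.of fun k l => B (v k) (w l)).det ≠ 0) : LinearIndependent R v := by
  refine Fintype.linearIndependent_iff.mpr fun g hg => ?_
  refine congrFun (eq_zero_of_vecMul_eq_zero h (funext fun l => ?_))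
  simpa [vecMul, dotProduct, map_sum, mul_comm] using congr(B $hg (w l))

def J₄ (R : Type*) [Ring R] : Matrix (Fin 4) (Fin 4) R :=
  !![0, 1, 0, 0; -1, 0, 0, 0; 0, 0, 0, 1; 0, 0, -1, 0]

theorem det_J₄ (R : Type*) [CommRing R] : (J₄ R).det = 1 := by
  simp [J₄, det_succ_row_zero, Fin.sum_univ_succ, Fin.succAbove]

namespace LinearMap.BilinForm

variable {K V : Type*} [Field K] [AddCommGroup V] [Module K V] {B : LinearMap.BilinForm K V}

theorem exists_eq_one_orthogonal_pair (hB : B.SeparatingLeft) (hB' : B.IsAlt)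
    (hV : 2 < finrank K V) {x₁ y₁ : V} (hx₁y₁ : B x₁ y₁ = 1) :
    ∃ x₂ y₂ : V, B x₂ y₂ = 1 ∧ B x₁ x₂ = 0 ∧ B y₁ x₂ = 0 ∧ B x₁ y₂ = 0 ∧ B y₁ y₂ = 0 := by
  -- the projection onto the orthogonal complement of the plane spanned by `x₁` and `y₁`
  let π : V → V := fun v => v + B y₁ v • x₁ - B x₁ v • y₁
  have hy₁x₁ : B y₁ x₁ = -1 := by rw [← hB'.neg_eq, hx₁y₁]
  have hπx₁ : ∀ v, B x₁ (π v) = 0 := fun v => by simp [π, hB' x₁, hx₁y₁]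
  have hπy₁ : ∀ v, B y₁ (π v) = 0 := fun v => by simp [π, hB' y₁, hy₁x₁]
  have hspan : Submodule.span K {x₁, y₁} ≠ ⊤ := by
    classical
    intro htop
    have := finrank_span_finset_le_card (R := K) ({x₁, y₁} : Finset V)
    rw [Finset.coe_pair, Set.finrank, htop, finrank_top] at this
    exact absurd (this.trans Finset.card_le_two) hV.not_ge
  obtain ⟨v, hv⟩ := SetLike.exists_not_mem_of_ne_top _ hspan
  have hx₂ : π v ≠ 0 := by
    intro h
    apply hv
    have : v = B x₁ v • y₁ - B y₁ v • x₁ := by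
      rw [← sub_eq_zero, ← h]; simp only [π]; abel
    rw [this]
    exact Submodule.sub_mem _ (Submodule.smul_mem _ _ (Submodule.subset_span (by simp)))
      (Submodule.smul_mem _ _ (Submodule.subset_span (by simp)))
  obtain ⟨y, hy⟩ := hB.exists_eq_one hx₂
  refine ⟨π v, π y, ?_, hπx₁ v, hπy₁ v, hπx₁ y, hπy₁ y⟩
  have hx₂x₁ : B (π v) x₁ = 0 := hB'.isRefl _ _ (hπx₁ v)
  have hx₂y₁ : B (π v) y₁ = 0 := hB'.isRefl _ _ (hπy₁ v)
  show B (π v) (y + B y₁ y • x₁ - B x₁ y • y₁) = 1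
  simp [hy, hx₂x₁, hx₂y₁]

theorem exists_basis_toMatrix₂_eq_J₄ (hB : B.SeparatingLeft) (hB' : B.IsAlt)
    (h4 : finrank K V = 4) : ∃ b : Basis (Fin 4) K V, toMatrix₂ b b B = J₄ K := by
  have : Nontrivial V := Module.nontrivial_of_finrank_eq_succ h4
  obtain ⟨x₁, hx₁⟩ := exists_ne (0 : V)
  obtain ⟨y₁, hx₁y₁⟩ := hB.exists_eq_one hx₁
  obtain ⟨x₂, y₂, hx₂y₂, hx₁x₂, hy₁x₂, hx₁y₂, hy₁y₂⟩ :=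
    exists_eq_one_orthogonal_pair hB hB' (by omega) hx₁y₁
  have hy₁x₁ : B y₁ x₁ = -1 := by rw [← hB'.neg_eq, hx₁y₁]
  have hy₂x₂ : B y₂ x₂ = -1 := by rw [← hB'.neg_eq, hx₂y₂]
  have hx₂x₁ : B x₂ x₁ = 0 := hB'.isRefl _ _ hx₁x₂
  have hx₂y₁ : B x₂ y₁ = 0 := hB'.isRefl _ _ hy₁x₂
  have hy₂x₁ : B y₂ x₁ = 0 := hB'.isRefl _ _ hx₁y₂
  have hy₂y₁ : B y₂ y₁ = 0 := hB'.isRefl _ _ hy₁y₂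
  let e : Fin 4 → V := ![x₁, y₁, x₂, y₂]
  have hgram : Matrix.of (fun k l => B (e k) (e l)) = J₄ K := by
    ext k l
    fin_cases k <;> fin_cases l <;>
      simp [e, J₄, hB' _, hx₁y₁, hy₁x₁, hx₁x₂, hy₁x₂, hx₁y₂, hy₁y₂, hx₂x₁, hx₂y₁, hy₂x₁, hy₂y₁,
        hx₂y₂, hy₂x₂]
  have he : LinearIndependent K e :=
    linearIndependent_of_det_ne_zero B (by rw [hgram, det_J₄]; exact one_ne_zero)
  refine ⟨basisOfLinearIndependentOfCardEqFinrank he (by simp [h4]), ?_⟩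
  ext k l
  rw [toMatrix₂_apply, coe_basisOfLinearIndependentOfCardEqFinrank, ← hgram, of_apply]

end LinearMap.BilinForm

namespace Matrix

variable {K : Type*} [Field K] [NeZero (2 : K)] {M : Matrix (Fin 4) (Fin 4) K}

theorem exists_eq_of_isSelfAdjoint_J₄ (hM : Matrix.IsSelfAdjoint (J₄ K) M) (htr : M.trace = 0) :
    ∃ a b c d e : K, M = !![a, 0, d, e; 0, a, b, c; c, -e, -a, 0; -b, d, 0, -a] := by
  have E : ∀ k l, (Mᵀ * J₄ K) k l = (J₄ K * M) k l := fun k l => congrFun (congrFun hM k) l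
  have e00 := E 0 0; have e01 := E 0 1; have e11 := E 1 1; have e20 := E 2 0; have e21 := E 2 1
  have e22 := E 2 2; have e23 := E 2 3; have e30 := E 3 0; have e31 := E 3 1; have e33 := E 3 3
  simp [J₄, mul_apply, Fin.sum_univ_four] at e00 e01 e11 e20 e21 e22 e23 e30 e31 e33
  simp only [trace, diag, Fin.sum_univ_four] at htr
  have two : (2 : K) ≠ 0 := two_ne_zero
  refine ⟨M 0 0, M 1 2, M 1 3, M 0 2, M 0 3, ?_⟩
  ext k l
  fin_cases k <;> fin_cases l <;> simp <;> grind

theorem mul_self_eq_smul_one_of_isSelfAdjoint_J₄ (hM : Matrix.IsSelfAdjoint (J₄ K) M)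
    (htr : M.trace = 0) : ∃ c : K, M * M = c • 1 := by
  obtain ⟨a, b, c, d, e, rfl⟩ := exists_eq_of_isSelfAdjoint_J₄ hM htr
  refine ⟨a ^ 2 + c * d - b * e, ?_⟩
  ext k l
  fin_cases k <;> fin_cases l <;> simp [mul_apply, Fin.sum_univ_four] <;> ring

end Matrix

namespace Module.End

section Symplectic

variable {K V : Type*} [Field K] [NeZero (2 : K)] [AddCommGroup V] [Module K V]
  {B : LinearMap.BilinForm K V}

theorem mul_self_eq_smul_one_of_isAdjointPair (hB : B.SeparatingLeft) (hB' : B.IsAlt)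
    (h4 : finrank K V = 4) {P : End K V} (hP : IsAdjointPair B B P P)
    (htr : trace K V P = 0) : ∃ c : K, P * P = c • 1 := by
  obtain ⟨b, hb⟩ := LinearMap.BilinForm.exists_basis_toMatrix₂_eq_J₄ hB hB' h4
  have hM : Matrix.IsSelfAdjoint (J₄ K) (toMatrix b b P) := by
    rw [Matrix.IsSelfAdjoint, ← isAdjointPair_toLinearMap₂ b b, ← hb,
      Matrix.toLinearMap₂_toMatrix₂, Matrix.toLin_toMatrix]
    exact hP
  obtain ⟨c, hc⟩ := (toMatrix b b P).mul_self_eq_smul_one_of_isSelfAdjoint_J₄ hM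
    (by rwa [← trace_eq_matrix_trace])
  exact ⟨c, (toMatrix b b).injective (by rw [toMatrix_mul, hc, map_smul, toMatrix_one])⟩

theorem commutator_mul_self_eq_smul_one_of_isAdjointPair (hB : B.SeparatingLeft)
    (hB' : B.IsAlt) (h4 : finrank K V = 4) {P₁ P₂ : End K V}
    (hP₁ : IsAdjointPair B B P₁ P₁) (hP₂ : IsAdjointPair B B P₂ P₂)
    (htr₁ : trace K V P₁ = 0) (htr₂ : trace K V P₂ = 0) :
    ∃ c : K, (P₁ * P₂ - P₂ * P₁) * (P₁ * P₂ - P₂ * P₁) = c • 1 := by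
  obtain ⟨a, ha⟩ := mul_self_eq_smul_one_of_isAdjointPair hB hB' h4 hP₁ htr₁
  obtain ⟨b, hb⟩ := mul_self_eq_smul_one_of_isAdjointPair hB hB' h4 hP₂ htr₂
  obtain ⟨c, hc⟩ := mul_self_eq_smul_one_of_isAdjointPair hB hB' h4 (P := P₁ + P₂)
    (hP₁.add hP₂) (by rw [map_add, htr₁, htr₂, add_zero])
  exact ⟨_, commutator_mul_self_eq_smul_one ha hb hc⟩

end Symplectic

section Orthogonal

variable {K W : Type*} [Field K] [AddCommGroup W] [Module K W]

theorem sq_eq_zero_of_pow_eq_zero [FiniteDimensional K W] (h2 : finrank K W = 2) {X : End K W}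
    {n : ℕ} (hX : X ^ n = 0) : X ^ 2 = 0 := by
  have h := ker_pow_le_ker_pow_finrank X n
  rwa [hX, ker_zero, h2, top_le_iff, ker_eq_top] at h

theorem eq_zero_of_isAdjointPair_neg_of_sq_eq_zero [NeZero (2 : K)]
    {B : LinearMap.BilinForm K W} (hB : B.SeparatingLeft) (hB' : B.IsSymm)
    (h2 : finrank K W = 2) {X : End K W} (hX : IsAdjointPair B B X (-X)) (hX2 : X ^ 2 = 0) :
    X = 0 := by
  have hXX : ∀ w, X (X w) = 0 := fun w => by simpa [sq] using congr($hX2 w)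
  by_contra! hX0
  obtain ⟨u, hu⟩ : ∃ u, X u ≠ 0 := by
    by_contra! h
    exact hX0 (LinearMap.ext h)
  have hli : LinearIndependent K ![X u, u] :=
    (LinearIndependent.pair_iff' hu).mpr fun a ha => hu (by rw [← ha, map_smul, hXX, smul_zero])
  let b := basisOfLinearIndependentOfCardEqFinrank hli (by simp [h2])
  have hXu : B (X u) = 0 := by
    refine b.ext fun k => ?_
    fin_cases k
    · simpa [b, hXX] using hX u (X u)
    · have h := hX u u
      rw [Pi.neg_apply, map_neg, hB'.eq u (X u)] at h
      have h2 : (2 : K) * B (X u) u = 0 := by linear_combination h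
      simpa [b] using (mul_eq_zero.mp h2).resolve_left two_ne_zero
  exact hu (hB _ fun w => by rw [hXu, LinearMap.zero_apply])

end Orthogonal

end Module.End

theorem LinearMap.IsAdjointPair.comp_isAdjointPair_neg {K V W : Type*} [Field K]
    [AddCommGroup V] [Module K V] [AddCommGroup W] [Module K W] {BV : LinearMap.BilinForm K V}
    {BW : LinearMap.BilinForm K W} (hBV : BV.IsAlt) (hBW : BW.IsSymm) {i : W →ₗ[K] V}
    {j : V →ₗ[K] W} (h : IsAdjointPair BW BV i j) : IsAdjointPair BW BW (j ∘ₗ i) (-(j ∘ₗ i)) :=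
  fun w w' => by
    rw [LinearMap.comp_apply, hBW.eq, ← h, ← hBV.neg_eq, h, Pi.neg_apply, map_neg]
    rfl

theorem stmt8_general
    (V W : Type) [AddCommGroup V] [Module ℂ V]
    [AddCommGroup W] [Module ℂ W] [FiniteDimensional ℂ W]
    (BV : LinearMap.BilinForm ℂ V) (BW : LinearMap.BilinForm ℂ W)
    (hVnd : BV.Nondegenerate) (hWnd : BW.Nondegenerate)
    (hVsymp : ∀ u v : V, BV u v = -BV v u)
    (hWorth : ∀ u v : W, BW u v = BW v u)
    (hV4 : Module.finrank ℂ V = 4) (hW2 : Module.finrank ℂ W = 2)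
    (B₁ B₂ : Module.End ℂ V) (i : W →ₗ[ℂ] V) (j : V →ₗ[ℂ] W)
    (hB₁ : ∀ u v : V, BV (B₁ u) v = BV u (B₁ v))
    (hB₂ : ∀ u v : V, BV (B₂ u) v = BV u (B₂ v))
    (htr₁ : LinearMap.trace ℂ V B₁ = 0) (htr₂ : LinearMap.trace ℂ V B₂ = 0)
    (hadj : ∀ (w : W) (v : V), BW w (j v) = BV (i w) v)
    (hADHM : B₁ * B₂ - B₂ * B₁ + i ∘ₗ j = 0) :
    (i ∘ₗ j) ∘ₗ (i ∘ₗ j) = 0 ∧ j ∘ₗ i = 0 := by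
  have hValt : BV.IsAlt := fun v => self_eq_neg.mp (hVsymp v v)
  have hWsymm : BW.IsSymm := ⟨hWorth⟩
  obtain ⟨c, hc⟩ := Module.End.commutator_mul_self_eq_smul_one_of_isAdjointPair hVnd.1 hValt hV4
    hB₁ hB₂ htr₁ htr₂
  have hsq : (i ∘ₗ j) ∘ₗ (i ∘ₗ j) = c • 1 := by
    rw [eq_neg_of_add_eq_zero_right hADHM, ← hc, neg_comp, comp_neg, neg_neg]; rfl
  have hc0 : c = 0 :=
    eq_zero_of_smul_one_eq_comp (f := i) (g := j ∘ₗ i ∘ₗ j) (by omega) (by rw [← hsq]; rfl)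
  have hV : (i ∘ₗ j) ∘ₗ (i ∘ₗ j) = 0 := by rw [hsq, hc0, zero_smul]
  have hW3 : (j ∘ₗ i) ^ 3 = 0 := by
    rw [show (j ∘ₗ i) ^ 3 = j ∘ₗ ((i ∘ₗ j) ∘ₗ (i ∘ₗ j)) ∘ₗ i by rfl, hV, zero_comp, comp_zero]
  exact ⟨hV, Module.End.eq_zero_of_isAdjointPair_neg_of_sq_eq_zero hWnd.1 hWsymm hW2
    (IsAdjointPair.comp_isAdjointPair_neg hValt hWsymm fun w v => (hadj w v).symm)
    (Module.End.sq_eq_zero_of_pow_eq_zero hW2 hW3)⟩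

/-- Let `V` be a 4-dimensional symplectic ℂ-vector space and `W` a
2-dimensional orthogonal ℂ-vector space.  If `B₁, B₂` are trace-free self-adjoint
endomorphisms of `V` and `i : W → V` (with adjoint `j = i*`) satisfies
`[B₁,B₂] + i i* = 0`, then `(i i*)² = 0` and `i* i = 0`. -/
theorem stmt8
    (V W : Type) [AddCommGroup V] [Module ℂ V] [FiniteDimensional ℂ V]
    [AddCommGroup W] [Module ℂ W] [FiniteDimensional ℂ W]
    (BV : LinearMap.BilinForm ℂ V) (BW : LinearMap.BilinForm ℂ W)
    (hVnd : BV.Nondegenerate) (hWnd : BW.Nondegenerate)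
    (hVsymp : ∀ u v : V, BV u v = -BV v u)
    (hWorth : ∀ u v : W, BW u v = BW v u)
    (hV4 : Module.finrank ℂ V = 4) (hW2 : Module.finrank ℂ W = 2)
    (B₁ B₂ : Module.End ℂ V) (i : W →ₗ[ℂ] V) (j : V →ₗ[ℂ] W)
    (hB₁ : ∀ u v : V, BV (B₁ u) v = BV u (B₁ v))
    (hB₂ : ∀ u v : V, BV (B₂ u) v = BV u (B₂ v))
    (htr₁ : LinearMap.trace ℂ V B₁ = 0) (htr₂ : LinearMap.trace ℂ V B₂ = 0)
    (hadj : ∀ (w : W) (v : V), BW w (j v) = BV (i w) v)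
    (hADHM : B₁ * B₂ - B₂ * B₁ + i ∘ₗ j = 0) :
    (i ∘ₗ j) ∘ₗ (i ∘ₗ j) = 0 ∧ j ∘ₗ i = 0 :=
  stmt8_general V W BV BW hVnd hWnd hVsymp hWorth hV4 hW2 B₁ B₂ i j hB₁ hB₂ htr₁ htr₂ hadj hADHM
end

section
/- Let U be an ε-space (ε ∈ {−1,+1}) with form (·,·) and X an endomorphism of U; consider the bilinear form β on U defined by β(v,w) := (v, Xw). (1) If X is skew-adjoint, then β(w,v) = −ε·β(v,w) for all v,w ∈ U, the left kernel and the right kernel of β both equal ker X, and β descends to a nondegenerate bilinear form of type −ε on U/ker X ≅ Im X (this is the form |Xv, Xw| := (v, Xw) on Im X). (2) If X is self-adjoint, the same statements hold with −ε replaced by ε. -/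
/-!
If `B (X u) v = s * B u (X v)` for a unit `s` (`s = -1` for skew-adjoint, `s = 1` for
self-adjoint `X`), then `v` is left-orthogonal to `Im X` iff `X v` is orthogonal to everything,
so by nondegeneracy the left kernel of `β = B(·, X ·)` is `ker X`; the right kernel is `ker X`
directly. Hence `β` descends along `U ⧸ ker X ≃ Im X` to a nondegenerate form on `Im X`, and
its symmetry type `ε s` is read off from `B w (X v) = ε B (X v) w = ε s B v (X w)`.
-/

namespace LinearMap.BilinForm

variable {R M : Type*} [CommRing R] [AddCommGroup M] [Module R M]
  (B : LinearMap.BilinForm R M) (X : Module.End R M)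

theorem apply_apply_eq_zero_iff_of_adjoint {s : Rˣ}
    (hadj : ∀ u v, B (X u) v = s * B u (X v)) (v w : M) :
    B v (X w) = 0 ↔ B (X v) w = 0 := by
  rw [hadj, Units.mul_right_eq_zero]

theorem ker_le_ker_compl₂_range_subtype {s : Rˣ}
    (hadj : ∀ u v, B (X u) v = s * B u (X v)) :
    ker X ≤ ker (B.compl₂ (range X).subtype) := by
  intro v hv
  ext ⟨_, w, rfl⟩
  simp [apply_apply_eq_zero_iff_of_adjoint B X hadj, mem_ker.mp hv]

theorem leftKernel_compl₂_eq_ker (hB : B.SeparatingLeft) {s : Rˣ}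
    (hadj : ∀ u v, B (X u) v = s * B u (X v)) :
    {v | ∀ w, B v (X w) = 0} = ↑(ker X) := by
  ext v
  simp only [Set.mem_ofPred_eq, SetLike.mem_coe, mem_ker,
    apply_apply_eq_zero_iff_of_adjoint B X hadj]
  exact ⟨hB (X v), fun h w => by rw [h, map_zero, LinearMap.zero_apply]⟩

theorem rightKernel_compl₂_eq_ker (hB : B.SeparatingRight) :
    {w | ∀ v, B v (X w) = 0} = ↑(ker X) := by
  ext w
  exact ⟨hB (X w), fun h v => by rw [mem_ker.mp h, map_zero]⟩

theorem apply_apply_swap_of_adjoint {ε : R} (hsymm : ∀ u v, B u v = ε * B v u) {s : Rˣ}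
    (hadj : ∀ u v, B (X u) v = s * B u (X v)) (v w : M) :
    B w (X v) = ε * s * B v (X w) := by
  rw [hsymm, hadj, mul_assoc]

/-- The paper's form `|X v, X w| := B v (X w)` on `Im X`. -/
noncomputable def rangeForm (hker : ker X ≤ ker (B.compl₂ (range X).subtype)) :
    LinearMap.BilinForm R (range X) :=
  (ker X).liftQ (B.compl₂ (range X).subtype) hker ∘ₗ X.quotKerEquivRange.symm.toLinearMap

@[simp]
theorem rangeForm_mk_apply (hker : ker X ≤ ker (B.compl₂ (range X).subtype)) (v : M)
    (y : range X) : rangeForm B X hker ⟨X v, mem_range_self X v⟩ y = B v y := by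
  simp [rangeForm]

theorem rangeForm_nondegenerate (hB : B.Nondegenerate) {s : Rˣ}
    (hadj : ∀ u v, B (X u) v = s * B u (X v)) :
    (rangeForm B X (ker_le_ker_compl₂_range_subtype B X hadj)).Nondegenerate := by
  constructor
  · rintro ⟨_, v, rfl⟩ hv
    have hv' : v ∈ {v | ∀ w, B v (X w) = 0} := fun w => by
      simpa using hv ⟨X w, mem_range_self X w⟩
    rw [leftKernel_compl₂_eq_ker B X hB.1 hadj] at hv'
    exact Subtype.ext hv'
  · rintro ⟨_, w, rfl⟩ hw
    have hw' : w ∈ {w | ∀ v, B v (X w) = 0} := fun v => by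
      simpa using hw ⟨X v, mem_range_self X v⟩
    rw [rightKernel_compl₂_eq_ker B X hB.2] at hw'
    exact Subtype.ext hw'

theorem descends_to_range_of_adjoint (hB : B.Nondegenerate) {ε : R}
    (hsymm : ∀ u v, B u v = ε * B v u) {s : Rˣ} (hadj : ∀ u v, B (X u) v = s * B u (X v))
    {c : R} (hc : c = ε * s) :
    (∀ v w, B w (X v) = c * B v (X w)) ∧
      {v | ∀ w, B v (X w) = 0} = ↑(ker X) ∧
      {w | ∀ v, B v (X w) = 0} = ↑(ker X) ∧
      ∃ γ : LinearMap.BilinForm R (range X),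
        (∀ x y : range X, γ y x = c * γ x y) ∧
        γ.Nondegenerate ∧
        ∀ v w, γ ⟨X v, mem_range_self X v⟩ ⟨X w, mem_range_self X w⟩ = B v (X w) := by
  have hswap := hc ▸ apply_apply_swap_of_adjoint B X hsymm hadj
  refine ⟨hswap, leftKernel_compl₂_eq_ker B X hB.1 hadj, rightKernel_compl₂_eq_ker B X hB.2,
    rangeForm B X (ker_le_ker_compl₂_range_subtype B X hadj), ?_,
    rangeForm_nondegenerate B X hB hadj, fun v w => rangeForm_mk_apply _ _ _ v _⟩
  rintro ⟨_, v, rfl⟩ ⟨_, w, rfl⟩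
  simp only [rangeForm_mk_apply]
  exact hswap v w

end LinearMap.BilinForm

theorem stmt12_general
    (U : Type) [AddCommGroup U] [Module ℂ U]
    (B : LinearMap.BilinForm ℂ U) (ε : ℂ)
    (hnd : B.Nondegenerate)
    (hsymm : ∀ u v : U, B u v = ε * B v u)
    (X : Module.End ℂ U) :
    ((∀ u v : U, B (X u) v = -B u (X v)) →
      (∀ v w : U, B w (X v) = -ε * B v (X w)) ∧
      {v : U | ∀ w : U, B v (X w) = 0} = ↑(LinearMap.ker X) ∧
      {w : U | ∀ v : U, B v (X w) = 0} = ↑(LinearMap.ker X) ∧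
      ∃ γ : LinearMap.BilinForm ℂ ↥(LinearMap.range X),
        (∀ x y : ↥(LinearMap.range X), γ y x = -ε * γ x y) ∧
        γ.Nondegenerate ∧
        ∀ v w : U, γ ⟨X v, LinearMap.mem_range_self X v⟩
            ⟨X w, LinearMap.mem_range_self X w⟩ = B v (X w)) ∧
    ((∀ u v : U, B (X u) v = B u (X v)) →
      (∀ v w : U, B w (X v) = ε * B v (X w)) ∧
      {v : U | ∀ w : U, B v (X w) = 0} = ↑(LinearMap.ker X) ∧
      {w : U | ∀ v : U, B v (X w) = 0} = ↑(LinearMap.ker X) ∧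
      ∃ γ : LinearMap.BilinForm ℂ ↥(LinearMap.range X),
        (∀ x y : ↥(LinearMap.range X), γ y x = ε * γ x y) ∧
        γ.Nondegenerate ∧
        ∀ v w : U, γ ⟨X v, LinearMap.mem_range_self X v⟩
            ⟨X w, LinearMap.mem_range_self X w⟩ = B v (X w)) := by
  constructor
  · intro hskew
    exact LinearMap.BilinForm.descends_to_range_of_adjoint B X hnd hsymm (s := -1)
      (by simpa using hskew) (by simp)
  · intro hself
    exact LinearMap.BilinForm.descends_to_range_of_adjoint B X hnd hsymm (s := 1)
      (by simpa using hself) (by simp)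

/-- Let `U` be an ε-space with form `B`, `X` an endomorphism, and
`β (v, w) := B v (X w)`.
(1) If `X` is skew-adjoint, then `β` is (−ε)-symmetric, its left and right kernels both
equal `ker X`, and it descends to a nondegenerate (−ε)-symmetric form on `Im X`
(the form `|Xv, Xw| := B v (X w)`).
(2) If `X` is self-adjoint, the same holds with `−ε` replaced by `ε`. -/
theorem stmt12
    (U : Type) [AddCommGroup U] [Module ℂ U] [FiniteDimensional ℂ U]
    (B : LinearMap.BilinForm ℂ U) (ε : ℂ)
    (hε : ε = 1 ∨ ε = -1)
    (hnd : B.Nondegenerate)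
    (hsymm : ∀ u v : U, B u v = ε * B v u)
    (X : Module.End ℂ U) :
    ((∀ u v : U, B (X u) v = -B u (X v)) →
      (∀ v w : U, B w (X v) = -ε * B v (X w)) ∧
      {v : U | ∀ w : U, B v (X w) = 0} = ↑(LinearMap.ker X) ∧
      {w : U | ∀ v : U, B v (X w) = 0} = ↑(LinearMap.ker X) ∧
      ∃ γ : LinearMap.BilinForm ℂ ↥(LinearMap.range X),
        (∀ x y : ↥(LinearMap.range X), γ y x = -ε * γ x y) ∧
        γ.Nondegenerate ∧
        ∀ v w : U, γ ⟨X v, LinearMap.mem_range_self X v⟩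
            ⟨X w, LinearMap.mem_range_self X w⟩ = B v (X w)) ∧
    ((∀ u v : U, B (X u) v = B u (X v)) →
      (∀ v w : U, B w (X v) = ε * B v (X w)) ∧
      {v : U | ∀ w : U, B v (X w) = 0} = ↑(LinearMap.ker X) ∧
      {w : U | ∀ v : U, B v (X w) = 0} = ↑(LinearMap.ker X) ∧
      ∃ γ : LinearMap.BilinForm ℂ ↥(LinearMap.range X),
        (∀ x y : ↥(LinearMap.range X), γ y x = ε * γ x y) ∧
        γ.Nondegenerate ∧
        ∀ v w : U, γ ⟨X v, LinearMap.mem_range_self X v⟩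
            ⟨X w, LinearMap.mem_range_self X w⟩ = B v (X w)) :=
  stmt12_general U B ε hnd hsymm X
end

section
/- Let V be a 4-dimensional symplectic ℂ-vector space and X a self-adjoint endomorphism of V. Then X has an eigenvalue a ∈ ℂ whose eigenspace has dimension at least 2, i.e. dim ker(X − a·id) ≥ 2. -/
/-!
For an eigenvalue `a`, the operator `N = X - a` is self-adjoint, so `range (N ^ m)` is the
`B`-orthogonal of `ker (N ^ m)`, and `B (M w) w = 0` for every self-adjoint `M` because `B` is
alternating. If `ker N` were a line `K ∙ u`, induction on `m` gives `u ∈ range (N ^ m)`: writing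
`u = N ^ m w`, every `z` with `N ^ (m + 1) z = 0` has `N ^ m z = c • u`, hence
`B z u = B (N ^ m z) w = c • B (N ^ m w) w = 0`. But `u ∈ ker (N ^ m)` as well, and by the
Fitting decomposition `ker (N ^ m)` and `range (N ^ m)` are disjoint for large `m`.
-/

open Module LinearMap

namespace LinearMap.BilinForm

variable {K V : Type*} [Field K] [AddCommGroup V] [Module K V] {B : LinearMap.BilinForm K V}
  {N : Module.End K V}

theorem isSelfAdjoint_pow (hN : LinearMap.IsSelfAdjoint B ⇑N) (m : ℕ) :
    LinearMap.IsSelfAdjoint B ⇑(N ^ m) := by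
  induction m with
  | zero => exact isAdjointPair_one
  | succ m ih =>
    have h := hN.mul ih
    rwa [← pow_succ, ← pow_succ'] at h

theorem apply_self_eq_zero_of_isSelfAdjoint [NeZero (2 : K)] (hskew : ∀ u v, B u v = -B v u)
    (hN : LinearMap.IsSelfAdjoint B ⇑N) (w : V) : B (N w) w = 0 := by
  have h : (2 : K) * B (N w) w = 0 := by linear_combination hN w w + hskew (N w) w
  exact (mul_eq_zero.mp h).resolve_left two_ne_zero

theorem range_eq_orthogonal_ker [FiniteDimensional K V] (hB : B.Nondegenerate)
    (hN : LinearMap.IsSelfAdjoint B ⇑N) : range N = B.orthogonal (ker N) := by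
  refine Submodule.eq_of_le_of_finrank_le ?_ ?_
  · rintro _ ⟨x, rfl⟩ z hz
    rw [← hN, mem_ker.mp hz, map_zero, LinearMap.zero_apply]
  · rw [finrank_orthogonal hB, ← finrank_range_add_finrank_ker N]
    omega

theorem mem_range_pow_of_ker_eq_span [FiniteDimensional K V] [NeZero (2 : K)]
    (hB : B.Nondegenerate) (hskew : ∀ u v, B u v = -B v u) (hN : LinearMap.IsSelfAdjoint B ⇑N)
    {u : V} (hu : ker N = K ∙ u) (m : ℕ) : u ∈ range (N ^ m) := by
  induction m with
  | zero => exact ⟨u, rfl⟩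
  | succ m ih =>
    obtain ⟨w, rfl⟩ := ih
    rw [range_eq_orthogonal_ker hB (isSelfAdjoint_pow hN _), mem_orthogonal_iff]
    intro z hz
    have hNz : (N ^ m) z ∈ K ∙ (N ^ m) w := by
      rw [← hu, mem_ker, ← Module.End.mul_apply, ← pow_succ']
      exact hz
    obtain ⟨c, hc⟩ := Submodule.mem_span_singleton.mp hNz
    rw [← isSelfAdjoint_pow hN, ← hc, map_smul, smul_apply,
      apply_self_eq_zero_of_isSelfAdjoint hskew (isSelfAdjoint_pow hN m), smul_zero]

theorem finrank_ker_ne_one [FiniteDimensional K V] [NeZero (2 : K)] (hB : B.Nondegenerate)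
    (hskew : ∀ u v, B u v = -B v u) (hN : LinearMap.IsSelfAdjoint B ⇑N) :
    finrank K (ker N) ≠ 1 := by
  intro h
  obtain ⟨⟨u, hu⟩, hu0, -⟩ := finrank_eq_one_iff'.mp h
  replace hu0 : u ≠ 0 := by simpa using hu0
  have hker : ker N = K ∙ u := Eq.symm <| Submodule.eq_of_le_of_finrank_le
    ((Submodule.span_singleton_le_iff_mem _ _).mpr hu) (by rw [h, finrank_span_singleton hu0])
  obtain ⟨n, hn⟩ := Filter.eventually_atTop.mp N.eventually_disjoint_ker_pow_range_pow
  have hdisj := hn (n + 1) n.le_succ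
  have huker : u ∈ ker (N ^ (n + 1)) := by
    rw [mem_ker, pow_succ, Module.End.mul_apply, mem_ker.mp hu, map_zero]
  exact hu0 <| Submodule.disjoint_def.mp hdisj u huker
    (mem_range_pow_of_ker_eq_span hB hskew hN hker _)

theorem finrank_eigenspace_ne_one [FiniteDimensional K V] [NeZero (2 : K)]
    (hB : B.Nondegenerate) (hskew : ∀ u v, B u v = -B v u) {X : Module.End K V}
    (hX : LinearMap.IsSelfAdjoint B ⇑X) (a : K) : finrank K (X.eigenspace a) ≠ 1 := by
  rw [Module.End.eigenspace_def]
  exact finrank_ker_ne_one hB hskew (hX.sub (isAdjointPair_one.smul a))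

end LinearMap.BilinForm

/-- Let `V` be a 4-dimensional symplectic ℂ-vector space and `X` a
self-adjoint endomorphism of `V`.  Then `X` has an eigenvalue whose eigenspace has
dimension at least 2. -/
theorem stmt13
    (V : Type) [AddCommGroup V] [Module ℂ V] [FiniteDimensional ℂ V]
    (BV : LinearMap.BilinForm ℂ V)
    (hVnd : BV.Nondegenerate)
    (hVsymp : ∀ u v : V, BV u v = -BV v u)
    (hV4 : Module.finrank ℂ V = 4)
    (X : Module.End ℂ V)
    (hX : ∀ u v : V, BV (X u) v = BV u (X v)) :
    ∃ a : ℂ, 2 ≤ Module.finrank ℂ ↥(Module.End.eigenspace X a) := by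
  have : Nontrivial V := Module.nontrivial_of_finrank_eq_succ hV4
  obtain ⟨a, ha⟩ := Module.End.exists_eigenvalue X
  have hzero : finrank ℂ (X.eigenspace a) ≠ 0 :=
    Submodule.finrank_eq_zero.not.mpr (Module.End.hasEigenvalue_iff.mp ha)
  have hne := LinearMap.BilinForm.finrank_eigenspace_ne_one hVnd hVsymp hX a
  exact ⟨a, by omega⟩
end

section
/- Let V be a 4-dimensional symplectic ℂ-vector space and W a 3-dimensional orthogonal ℂ-vector space. Then the set {i ∈ Hom(W,V) : i ≠ 0, ii* = 0} is a single orbit under the action (g,h)·i = g ∘ i ∘ h⁻¹ of Sp(V) × O(W), where Sp(V) and O(W) are the groups of linear automorphisms of V and W preserving the respective forms: for any two nonzero i, i' ∈ Hom(W,V) with ii* = 0 and i'i'* = 0 there exist g ∈ Sp(V) and h ∈ O(W) with i' = g ∘ i ∘ h⁻¹. -/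
/-!
Since `BW (i* x) (i* y) = BV (i i* x) y = 0`, the range of `i*` is totally isotropic, so in the
3-dimensional nondegenerate orthogonal space `W` it is a line `ℂ w₀`. Dually `i = BW w₀ (·) • v`
with `w₀` isotropic and `v ≠ 0`, and `g ∘ i ∘ h⁻¹` is the map built in the same way from
`(g v, h w₀)`. It therefore suffices that `Sp(V)` is transitive on nonzero vectors (a product of
two symplectic transvections) and `O(W)` on nonzero isotropic vectors (a product of at most two
reflections).
-/

open Module

namespace LinearMap

theorem exists_apply_ne_zero_and_apply_ne_zero {R M N : Type*} [Semiring R] [AddCommMonoid M]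
    [Module R M] [AddCommMonoid N] [Module R N] {f g : M →ₗ[R] N} (hf : f ≠ 0) (hg : g ≠ 0) :
    ∃ y, f y ≠ 0 ∧ g y ≠ 0 := by
  obtain ⟨a, ha⟩ := DFunLike.ne_iff.1 hf
  obtain ⟨b, hb⟩ := DFunLike.ne_iff.1 hg
  by_cases hga : g a = 0
  · by_cases hfb : f b = 0
    · exact ⟨a + b, by simpa [hfb] using ha, by simpa [hga] using hb⟩
    · exact ⟨b, hfb, hb⟩
  · exact ⟨a, ha, hga⟩

namespace BilinForm

section CommRing

variable {R M : Type*} [CommRing R] [AddCommGroup M] [Module R M] {B : LinearMap.BilinForm R M}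

def SameIsometryOrbit (B : LinearMap.BilinForm R M) (u v : M) : Prop :=
  ∃ g : M ≃ₗ[R] M, (∀ a b, B (g a) (g b) = B a b) ∧ g u = v

theorem SameIsometryOrbit.trans {u v w : M} (huv : B.SameIsometryOrbit u v)
    (hvw : B.SameIsometryOrbit v w) : B.SameIsometryOrbit u w := by
  obtain ⟨g, hg, rfl⟩ := huv
  obtain ⟨g', hg', rfl⟩ := hvw
  exact ⟨g.trans g', fun a b => by simp [hg, hg'], rfl⟩

theorem IsAlt.exists_isometry_transvection (hB : B.IsAlt) (u : M) (c : R) :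
    ∃ g : M ≃ₗ[R] M, (∀ a b, B (g a) (g b) = B a b) ∧ ∀ x, g x = x + (c * B x u) • u := by
  have hu : (c • B.flip u) u = 0 := by simp [hB.self_eq_zero u]
  refine ⟨LinearEquiv.transvection hu, fun a b => ?_,
    fun x => by simp [LinearMap.transvection.apply]⟩
  rw [LinearEquiv.transvection.apply, LinearEquiv.transvection.apply]
  simp only [LinearMap.smul_apply, flip_apply, smul_eq_mul, map_add, map_smul,
    LinearMap.add_apply, hB.self_eq_zero u]
  have := hB.neg_eq u b
  linear_combination -(c * B a u) * this

end CommRing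

section Field

variable {K V : Type*} [Field K] [AddCommGroup V] [Module K V] {B : LinearMap.BilinForm K V}

theorem IsSymm.exists_isometry_reflection (hB : B.IsSymm) {x : V} (hx : B x x ≠ 0) :
    ∃ g : V ≃ₗ[K] V, (∀ a b, B (g a) (g b) = B a b) ∧ ∀ y, g y = y - (2 * B x y / B x x) • x := by
  have h2 : ((2 / B x x) • B x) x = 2 := by simp [hx]
  refine ⟨Module.reflection h2, fun a b => ?_, fun y => by simp [Module.reflection_apply]; ring_nf⟩
  simp only [Module.reflection_apply, LinearMap.smul_apply, smul_eq_mul,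
    map_sub, map_smul, LinearMap.sub_apply, hB.eq a x, hB.eq x b]
  field_simp
  ring

theorem IsAlt.sameIsometryOrbit_of_apply_ne_zero (hB : B.IsAlt) {v v' : V} (h : B v v' ≠ 0) :
    B.SameIsometryOrbit v v' := by
  obtain ⟨g, hg, hg_apply⟩ := hB.exists_isometry_transvection (v' - v) (B v v')⁻¹
  refine ⟨g, hg, ?_⟩
  rw [hg_apply, map_sub, hB.self_eq_zero, sub_zero, inv_mul_cancel₀ h, one_smul,
    add_sub_cancel]

theorem IsAlt.sameIsometryOrbit (hB : B.IsAlt) (hB' : B.Nondegenerate) {v v' : V} (hv : v ≠ 0)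
    (hv' : v' ≠ 0) : B.SameIsometryOrbit v v' := by
  obtain ⟨w, hvw, hwv'⟩ := exists_apply_ne_zero_and_apply_ne_zero
    (f := B v) (g := B.flip v') (fun h => hv (hB'.1 v (by simp [h])))
    (fun h => hv' (hB'.2 v' (by simpa using LinearMap.congr_fun h)))
  exact (hB.sameIsometryOrbit_of_apply_ne_zero hvw).trans
    (hB.sameIsometryOrbit_of_apply_ne_zero hwv')

variable [NeZero (2 : K)]

theorem IsSymm.sameIsometryOrbit_of_apply_ne_zero (hB : B.IsSymm) {e e' : V} (he : B e e = 0)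
    (he' : B e' e' = 0) (h : B e e' ≠ 0) : B.SameIsometryOrbit e e' := by
  have hx : B (e - e') (e - e') = -2 * B e e' := by
    simp only [map_sub, LinearMap.sub_apply, he, he', hB.eq e' e]
    ring
  obtain ⟨g, hg, hg_apply⟩ := hB.exists_isometry_reflection
    (x := e - e') (by rw [hx]; exact mul_ne_zero (neg_ne_zero.2 two_ne_zero) h)
  refine ⟨g, hg, ?_⟩
  have hcoeff : 2 * B (e - e') e / B (e - e') (e - e') = 1 := by
    rw [hx, map_sub, LinearMap.sub_apply, he, hB.eq e' e]
    field_simp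
    ring
  rw [hg_apply, hcoeff, one_smul, sub_sub_cancel]

theorem IsSymm.exists_isOrtho_self_apply_ne_zero_apply_ne_zero (hB : B.IsSymm) {e e' y : V}
    (he : B e e = 0) (hee' : B e e' = 0) (hey : B e y ≠ 0) (he'y : B e' y ≠ 0) :
    ∃ w, B w w = 0 ∧ B e w ≠ 0 ∧ B w e' ≠ 0 := by
  refine ⟨y - (B y y / (2 * B e y)) • e, ?_, ?_, ?_⟩
  · simp only [map_sub, map_smul, LinearMap.sub_apply, LinearMap.smul_apply, smul_eq_mul, he,
      hB.eq y e]
    field_simp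
    ring
  · simpa [he] using hey
  · simpa [hee', hB.eq y e'] using he'y

theorem IsSymm.sameIsometryOrbit (hB : B.IsSymm) (hB' : B.Nondegenerate) {e e' : V} (he : e ≠ 0)
    (he' : e' ≠ 0) (hee : B e e = 0) (he'e' : B e' e' = 0) : B.SameIsometryOrbit e e' := by
  by_cases hee' : B e e' = 0
  · obtain ⟨y, hey, he'y⟩ := exists_apply_ne_zero_and_apply_ne_zero
      (f := B e) (g := B e') (fun h => he (hB'.1 e (by simp [h])))
      (fun h => he' (hB'.1 e' (by simp [h])))
    obtain ⟨w, hww, hew, hwe'⟩ :=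
      hB.exists_isOrtho_self_apply_ne_zero_apply_ne_zero hee hee' hey he'y
    exact (hB.sameIsometryOrbit_of_apply_ne_zero hee hww hew).trans
      (hB.sameIsometryOrbit_of_apply_ne_zero hww he'e' hwe')
  · exact hB.sameIsometryOrbit_of_apply_ne_zero hee he'e' hee'

end Field

section Adjoint

variable {K V W : Type*} [Field K] [AddCommGroup V] [Module K V] [AddCommGroup W] [Module K W]
  {BV : LinearMap.BilinForm K V} {BW : LinearMap.BilinForm K W} {i : W →ₗ[K] V} {j : V →ₗ[K] W}

theorem Nondegenerate.two_mul_finrank_le_of_le_orthogonal [FiniteDimensional K W]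
    (hBW : BW.Nondegenerate) {S : Submodule K W} (hS : S ≤ BW.orthogonal S) :
    2 * finrank K S ≤ finrank K W := by
  have := Submodule.finrank_mono hS
  rw [finrank_orthogonal hBW] at this
  have := S.finrank_le
  omega

theorem range_le_orthogonal_range_of_comp_eq_zero (hadj : ∀ w v, BW w (j v) = BV (i w) v)
    (hij : i ∘ₗ j = 0) : LinearMap.range j ≤ BW.orthogonal (LinearMap.range j) := by
  rintro _ ⟨y, rfl⟩
  rw [mem_orthogonal_iff]
  rintro _ ⟨x, rfl⟩
  rw [hadj, ← LinearMap.comp_apply i j, hij]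
  simp

theorem eq_zero_of_adjoint_eq_zero (hBV : BV.Nondegenerate)
    (hadj : ∀ w v, BW w (j v) = BV (i w) v) (hj : j = 0) : i = 0 := by
  ext w
  exact hBV.1 _ fun v => by rw [← hadj, hj]; simp

theorem exists_eq_smul_of_comp_adjoint_eq_zero [FiniteDimensional K W] (hBV : BV.Nondegenerate)
    (hBW : BW.Nondegenerate) (hBW_symm : BW.IsSymm) (hW : finrank K W ≤ 3)
    (hadj : ∀ w v, BW w (j v) = BV (i w) v) (hi : i ≠ 0) (hij : i ∘ₗ j = 0) :
    ∃ (v : V) (w₀ : W), v ≠ 0 ∧ w₀ ≠ 0 ∧ BW w₀ w₀ = 0 ∧ ∀ w, i w = BW w₀ w • v := by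
  have hiso := range_le_orthogonal_range_of_comp_eq_zero hadj hij
  have hrank : finrank K (LinearMap.range j) ≤ 1 := by
    have := hBW.two_mul_finrank_le_of_le_orthogonal hiso
    omega
  obtain ⟨⟨w₀, hw₀⟩, hgen⟩ := finrank_le_one_iff.1 hrank
  have hj : ∀ x, ∃ c : K, j x = c • w₀ := fun x => by
    obtain ⟨c, hc⟩ := hgen ⟨j x, LinearMap.mem_range_self j x⟩
    exact ⟨c, (congrArg Subtype.val hc).symm⟩
  have hw₀_ne : w₀ ≠ 0 := by
    rintro rfl
    refine hi (eq_zero_of_adjoint_eq_zero hBV hadj (LinearMap.ext fun x => ?_))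
    obtain ⟨c, hc⟩ := hj x
    simpa using hc
  obtain ⟨u, hu⟩ : ∃ u, BW u w₀ ≠ 0 := by
    by_contra! h
    exact hw₀_ne (hBW.2 w₀ h)
  set v := (BW u w₀)⁻¹ • i u
  have hi_eq : ∀ w, i w = BW w₀ w • v := fun w => by
    refine sub_eq_zero.1 (hBV.1 _ fun x => ?_)
    obtain ⟨c, hc⟩ := hj x
    simp only [v, map_sub, map_smul, LinearMap.sub_apply, LinearMap.smul_apply, smul_eq_mul,
      ← hadj, hc, hBW_symm.eq w₀ w]
    field_simp
    ring
  refine ⟨v, w₀, ?_, hw₀_ne, hiso hw₀ w₀ hw₀, hi_eq⟩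
  intro hv
  exact hi (LinearMap.ext fun w => by simp [hi_eq, hv])

end Adjoint

end BilinForm
end LinearMap

theorem stmt16_general
    (V W : Type) [AddCommGroup V] [Module ℂ V] [FiniteDimensional ℂ V]
    [AddCommGroup W] [Module ℂ W] [FiniteDimensional ℂ W]
    (BV : LinearMap.BilinForm ℂ V) (BW : LinearMap.BilinForm ℂ W)
    (hVnd : BV.Nondegenerate) (hWnd : BW.Nondegenerate)
    (hVsymp : ∀ u v : V, BV u v = -BV v u)
    (hWorth : ∀ u v : W, BW u v = BW v u)
    (hW3 : Module.finrank ℂ W = 3)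
    (i i' : W →ₗ[ℂ] V) (j j' : V →ₗ[ℂ] W)
    (hadj : ∀ (w : W) (v : V), BW w (j v) = BV (i w) v)
    (hadj' : ∀ (w : W) (v : V), BW w (j' v) = BV (i' w) v)
    (hi : i ≠ 0) (hi' : i' ≠ 0)
    (hij : i ∘ₗ j = 0) (hij' : i' ∘ₗ j' = 0) :
    ∃ (g : V ≃ₗ[ℂ] V) (h : W ≃ₗ[ℂ] W),
      (∀ u v : V, BV (g u) (g v) = BV u v) ∧
      (∀ u v : W, BW (h u) (h v) = BW u v) ∧
      ∀ w : W, i' w = g (i (h.symm w)) := by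
  have hV_alt : BV.IsAlt := fun x => self_eq_neg.1 (hVsymp x x)
  have hW_symm : BW.IsSymm := ⟨hWorth⟩
  obtain ⟨v, w₀, hv, hw₀, hw₀_iso, hi_eq⟩ :=
    LinearMap.BilinForm.exists_eq_smul_of_comp_adjoint_eq_zero
      hVnd hWnd hW_symm hW3.le hadj hi hij
  obtain ⟨v', w₀', hv', hw₀', hw₀'_iso, hi'_eq⟩ :=
    LinearMap.BilinForm.exists_eq_smul_of_comp_adjoint_eq_zero
      hVnd hWnd hW_symm hW3.le hadj' hi' hij'
  obtain ⟨g, hg, rfl⟩ := hV_alt.sameIsometryOrbit hVnd hv hv'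
  obtain ⟨h, hh, rfl⟩ := hW_symm.sameIsometryOrbit hWnd hw₀ hw₀' hw₀_iso hw₀'_iso
  refine ⟨g, h, hg, hh, fun w => ?_⟩
  rw [hi'_eq, hi_eq, map_smul, ← hh w₀ (h.symm w), h.apply_symm_apply]

/-- Let `V` be a 4-dimensional symplectic ℂ-vector space and `W` a
3-dimensional orthogonal ℂ-vector space.  The set `{i ∈ Hom(W,V) : i ≠ 0, i i* = 0}`
is a single orbit of `Sp(V) × O(W)` acting by `(g,h)·i = g ∘ i ∘ h⁻¹`. -/
theorem stmt16
    (V W : Type) [AddCommGroup V] [Module ℂ V] [FiniteDimensional ℂ V]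
    [AddCommGroup W] [Module ℂ W] [FiniteDimensional ℂ W]
    (BV : LinearMap.BilinForm ℂ V) (BW : LinearMap.BilinForm ℂ W)
    (hVnd : BV.Nondegenerate) (hWnd : BW.Nondegenerate)
    (hVsymp : ∀ u v : V, BV u v = -BV v u)
    (hWorth : ∀ u v : W, BW u v = BW v u)
    (hV4 : Module.finrank ℂ V = 4) (hW3 : Module.finrank ℂ W = 3)
    (i i' : W →ₗ[ℂ] V) (j j' : V →ₗ[ℂ] W)
    (hadj : ∀ (w : W) (v : V), BW w (j v) = BV (i w) v)
    (hadj' : ∀ (w : W) (v : V), BW w (j' v) = BV (i' w) v)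
    (hi : i ≠ 0) (hi' : i' ≠ 0)
    (hij : i ∘ₗ j = 0) (hij' : i' ∘ₗ j' = 0) :
    ∃ (g : V ≃ₗ[ℂ] V) (h : W ≃ₗ[ℂ] W),
      (∀ u v : V, BV (g u) (g v) = BV u v) ∧
      (∀ u v : W, BW (h u) (h v) = BW u v) ∧
      ∀ w : W, i' w = g (i (h.symm w)) :=
  stmt16_general V W BV BW hVnd hWnd hVsymp hWorth hW3 i i' j j' hadj hadj' hi hi' hij hij'
end

section
/- Let V be a 4-dimensional symplectic ℂ-vector space and let B₁, B₂ be trace-free self-adjoint endomorphisms of V. Then the square of their commutator is a scalar endomorphism: there exists c ∈ ℂ with [B₁,B₂]² = c·id_V. -/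
/-!
In a basis the form is a skew matrix `Ω` and a self-adjoint `f` is a matrix `M` with `ΩM` skew.
A skew `4 × 4` matrix `S` has a Pfaffian adjugate `S♯` (its Hodge dual as a 2-form) with
`S♯S = SS♯ = Pf(S)·1`, and polarizing gives `2(A♯B + B♯A) = tr(A♯B)·1`. For `S = ΩM` with
`tr M = 0` we have `Ω♯S = Pf(Ω)M` of trace zero, hence `Ω♯S = -S♯Ω` and
`Pf(Ω)²M² = -Pf(S)Pf(Ω)·1`; since `det Ω = Pf(Ω)² ≠ 0`, every trace-free self-adjoint
endomorphism squares to a scalar. Applied to `B₁`, `B₂` and `B₁ + B₂` this makes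
`B₁B₂ + B₂B₁` scalar as well, and `[B₁,B₂]² = (B₁B₂ + B₂B₁)² - 4B₁²B₂²`.
-/

open scoped Matrix

namespace Matrix

variable {K : Type*} [Field K] {A B S : Matrix (Fin 4) (Fin 4) K}

def pfaffian4 (S : Matrix (Fin 4) (Fin 4) K) : K :=
  S 0 1 * S 2 3 - S 0 2 * S 1 3 + S 0 3 * S 1 2

def pfaffianAdj4 (S : Matrix (Fin 4) (Fin 4) K) : Matrix (Fin 4) (Fin 4) K :=
  !![0, -S 2 3, S 1 3, -S 1 2;
     S 2 3, 0, -S 0 3, S 0 2;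
     -S 1 3, S 0 3, 0, -S 0 1;
     S 1 2, -S 0 2, S 0 1, 0]

lemma transpose_pfaffianAdj4 (S : Matrix (Fin 4) (Fin 4) K) :
    (pfaffianAdj4 S)ᵀ = -pfaffianAdj4 S := by
  ext i j
  fin_cases i <;> fin_cases j <;> simp [pfaffianAdj4]

lemma apply_swap_of_transpose_eq_neg (hS : Sᵀ = -S) (i j : Fin 4) : S j i = -S i j := by
  simpa using congrFun (congrFun hS i) j

variable [NeZero (2 : K)]

lemma apply_self_of_transpose_eq_neg (hS : Sᵀ = -S) (i : Fin 4) : S i i = 0 := by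
  have h : (2 : K) * S i i = 0 := by linear_combination apply_swap_of_transpose_eq_neg hS i i
  exact (mul_eq_zero.mp h).resolve_left two_ne_zero

lemma det_eq_pfaffian4_sq (hS : Sᵀ = -S) : S.det = S.pfaffian4 ^ 2 := by
  have h := apply_swap_of_transpose_eq_neg hS
  have h0 := apply_self_of_transpose_eq_neg hS
  rw [det_succ_row_zero]
  simp [Fin.sum_univ_succ, det_fin_three, pfaffian4, submatrix, Fin.succAbove,
    h 0 1, h 0 2, h 0 3, h 1 2, h 1 3, h 2 3, h0]
  ring

lemma pfaffianAdj4_mul_self (hS : Sᵀ = -S) : pfaffianAdj4 S * S = S.pfaffian4 • 1 := by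
  have h := apply_swap_of_transpose_eq_neg hS
  have h0 := apply_self_of_transpose_eq_neg hS
  ext i j
  fin_cases i <;> fin_cases j <;>
    simp [pfaffianAdj4, pfaffian4, mul_apply, Fin.sum_univ_four,
      h 0 1, h 0 2, h 0 3, h 1 2, h 1 3, h 2 3, h0] <;> ring

lemma mul_pfaffianAdj4_self (hS : Sᵀ = -S) : S * pfaffianAdj4 S = S.pfaffian4 • 1 := by
  simpa [transpose_pfaffianAdj4, hS] using congrArg transpose (pfaffianAdj4_mul_self hS)

lemma two_smul_pfaffianAdj4_mul_add (hA : Aᵀ = -A) (hB : Bᵀ = -B) :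
    (2 : K) • (pfaffianAdj4 A * B + pfaffianAdj4 B * A) = (pfaffianAdj4 A * B).trace • 1 := by
  have ha := apply_swap_of_transpose_eq_neg hA
  have hb := apply_swap_of_transpose_eq_neg hB
  have ha0 := apply_self_of_transpose_eq_neg hA
  have hb0 := apply_self_of_transpose_eq_neg hB
  ext i j
  simp only [smul_apply, add_apply, mul_apply, Fin.sum_univ_four, one_apply, trace, diag_apply,
    smul_eq_mul]
  fin_cases i <;> fin_cases j <;>
    simp [pfaffianAdj4,
      ha 0 1, ha 0 2, ha 0 3, ha 1 2, ha 1 3, ha 2 3, ha0,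
      hb 0 1, hb 0 2, hb 0 3, hb 1 2, hb 1 3, hb 2 3, hb0, -mul_eq_zero] <;> ring

theorem exists_sq_eq_smul_one_of_isSelfAdjoint_fin_four {Ω M : Matrix (Fin 4) (Fin 4) K}
    (hΩ : Ωᵀ = -Ω) (hdet : Ω.det ≠ 0) (hM : Ω.IsSelfAdjoint M) (htr : M.trace = 0) :
    ∃ μ : K, M ^ 2 = μ • 1 := by
  set S := Ω * M
  have hS : Sᵀ = -S := by
    rw [transpose_mul, hΩ, mul_neg]
    exact congrArg _ hM
  have hp : Ω.pfaffian4 ≠ 0 := by simpa [det_eq_pfaffian4_sq hΩ] using hdet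
  have hN : pfaffianAdj4 Ω * S = Ω.pfaffian4 • M := by
    rw [← mul_assoc, pfaffianAdj4_mul_self hΩ, smul_one_mul]
  have hanti : pfaffianAdj4 Ω * S = -(pfaffianAdj4 S * Ω) := by
    have htrN : (pfaffianAdj4 Ω * S).trace = 0 := by rw [hN, trace_smul, htr, smul_zero]
    have h := two_smul_pfaffianAdj4_mul_add hΩ hS
    rw [htrN, zero_smul, smul_eq_zero] at h
    exact eq_neg_of_add_eq_zero_left (h.resolve_left two_ne_zero)
  have hsq : (pfaffianAdj4 Ω * S) ^ 2 = -(S.pfaffian4 * Ω.pfaffian4) • 1 := calc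
    (pfaffianAdj4 Ω * S) ^ 2 = pfaffianAdj4 Ω * S * -(pfaffianAdj4 S * Ω) := by rw [sq, ← hanti]
    _ = -(pfaffianAdj4 Ω * (S * pfaffianAdj4 S) * Ω) := by noncomm_ring
    _ = -(S.pfaffian4 * Ω.pfaffian4) • 1 := by
      rw [mul_pfaffianAdj4_self hS, mul_smul_one, smul_mul, pfaffianAdj4_mul_self hΩ, smul_smul,
        neg_smul]
  refine ⟨-S.pfaffian4 / Ω.pfaffian4, smul_right_injective _ (pow_ne_zero 2 hp) ?_⟩
  dsimp only
  rw [← smul_pow, ← hN, hsq, smul_smul]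
  congr 1
  field_simp

end Matrix

theorem commutator_sq_eq_smul_one {R A : Type*} [CommRing R] [Ring A] [Algebra R A] {x y : A}
    {μ ν κ : R} (hx : x ^ 2 = μ • 1) (hy : y ^ 2 = ν • 1) (hxy : (x + y) ^ 2 = κ • 1) :
    (x * y - y * x) ^ 2 = ((κ - μ - ν) ^ 2 - 4 * μ * ν) • 1 := by
  simp only [← Algebra.algebraMap_eq_smul_one] at *
  have hanti : x * y + y * x = algebraMap R A (κ - μ - ν) := by
    rw [map_sub, map_sub, ← hx, ← hy, ← hxy]; noncomm_ring
  calc (x * y - y * x) ^ 2 = (x * y + y * x) ^ 2 - 2 * (x * y ^ 2 * x + y * x ^ 2 * y) := by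
        noncomm_ring
    _ = algebraMap R A ((κ - μ - ν) ^ 2 - 2 * (ν * μ + μ * ν)) := by
      rw [hanti, hx, hy, ← Algebra.commutes ν x, ← Algebra.commutes μ y, mul_assoc, mul_assoc,
        ← sq, ← sq, hx, hy]
      simp only [map_sub, map_mul, map_pow, map_add, map_ofNat]
    _ = _ := by congr 1; ring

theorem LinearMap.BilinForm.exists_sq_eq_smul_one_of_finrank_eq_four {K V : Type*} [Field K]
    [NeZero (2 : K)] [AddCommGroup V] [Module K V] {B : LinearMap.BilinForm K V}
    (hB : B.Nondegenerate) (hskew : ∀ u v, B u v = -B v u) (hV : Module.finrank K V = 4)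
    {f : Module.End K V} (hf : IsAdjointPair B B f f) (htr : LinearMap.trace K V f = 0) :
    ∃ μ : K, f ^ 2 = μ • 1 := by
  have : Module.Finite K V := Module.finite_of_finrank_eq_succ hV
  let b := (Module.finBasis K V).reindex (finCongr hV)
  have hΩ : (BilinForm.toMatrix b B)ᵀ = -BilinForm.toMatrix b B := by
    ext i j
    simp [toMatrix_apply, hskew (b j) (b i)]
  have hM : (BilinForm.toMatrix b B).IsSelfAdjoint (LinearMap.toMatrix b b f) := by
    rw [Matrix.IsSelfAdjoint, ← isAdjointPair_toLinearMap₂ b b, Matrix.toLin_toMatrix,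
      BilinForm.toMatrix, Matrix.toLinearMap₂_toMatrix₂]
    exact hf
  obtain ⟨μ, hμ⟩ := Matrix.exists_sq_eq_smul_one_of_isSelfAdjoint_fin_four hΩ
    ((nondegenerate_iff_det_ne_zero b).mp hB) hM (by rwa [← LinearMap.trace_eq_matrix_trace])
  refine ⟨μ, (LinearMap.toMatrix b b).injective ?_⟩
  rw [← LinearMap.toMatrix_pow, hμ, map_smul, LinearMap.toMatrix_one]

theorem stmt18_general
    (V : Type) [AddCommGroup V] [Module ℂ V]
    (BV : LinearMap.BilinForm ℂ V)
    (hVnd : BV.Nondegenerate)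
    (hVsymp : ∀ u v : V, BV u v = -BV v u)
    (hV4 : Module.finrank ℂ V = 4)
    (B₁ B₂ : Module.End ℂ V)
    (hB₁ : ∀ u v : V, BV (B₁ u) v = BV u (B₁ v))
    (hB₂ : ∀ u v : V, BV (B₂ u) v = BV u (B₂ v))
    (htr₁ : LinearMap.trace ℂ V B₁ = 0) (htr₂ : LinearMap.trace ℂ V B₂ = 0) :
    ∃ c : ℂ, (B₁ * B₂ - B₂ * B₁) ^ 2 = c • (1 : Module.End ℂ V) := by
  have sq_scalar (f : Module.End ℂ V) (hf : LinearMap.IsAdjointPair BV BV f f)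
      (htr : LinearMap.trace ℂ V f = 0) : ∃ μ : ℂ, f ^ 2 = μ • 1 :=
    LinearMap.BilinForm.exists_sq_eq_smul_one_of_finrank_eq_four hVnd hVsymp hV4 hf htr
  obtain ⟨μ, hμ⟩ := sq_scalar B₁ hB₁ htr₁
  obtain ⟨ν, hν⟩ := sq_scalar B₂ hB₂ htr₂
  obtain ⟨κ, hκ⟩ := sq_scalar (B₁ + B₂) (LinearMap.IsAdjointPair.add hB₁ hB₂)
    (by rw [map_add, htr₁, htr₂, add_zero])
  exact ⟨_, commutator_sq_eq_smul_one hμ hν hκ⟩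

/-- Let `V` be a 4-dimensional symplectic ℂ-vector space and `B₁, B₂`
trace-free self-adjoint endomorphisms of `V`.  Then `[B₁,B₂]²` is a scalar:
there is `c : ℂ` with `[B₁,B₂]² = c • id`. -/
theorem stmt18
    (V : Type) [AddCommGroup V] [Module ℂ V] [FiniteDimensional ℂ V]
    (BV : LinearMap.BilinForm ℂ V)
    (hVnd : BV.Nondegenerate)
    (hVsymp : ∀ u v : V, BV u v = -BV v u)
    (hV4 : Module.finrank ℂ V = 4)
    (B₁ B₂ : Module.End ℂ V)
    (hB₁ : ∀ u v : V, BV (B₁ u) v = BV u (B₁ v))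
    (hB₂ : ∀ u v : V, BV (B₂ u) v = BV u (B₂ v))
    (htr₁ : LinearMap.trace ℂ V B₁ = 0) (htr₂ : LinearMap.trace ℂ V B₂ = 0) :
    ∃ c : ℂ, (B₁ * B₂ - B₂ * B₁) ^ 2 = c • (1 : Module.End ℂ V) :=
  stmt18_general V BV hVnd hVsymp hV4 B₁ B₂ hB₁ hB₂ htr₁ htr₂
end

section
/- Let V be a 4-dimensional symplectic ℂ-vector space and W a 3-dimensional orthogonal ℂ-vector space. If B₁, B₂ are trace-free self-adjoint endomorphisms of V and i ∈ Hom(W,V) satisfies [B₁,B₂] + ii* = 0, then (ii*)² = 0. -/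
/-!
If `J` is the Gram matrix of the symplectic form, a self-adjoint `A` makes `J A` skew, so
`A = J⁻¹ (J A)` is a product of two skew-symmetric 4×4 matrices, and such products satisfy an
explicit quadratic relation (a shadow of the Pfaffian). Hence a trace-free self-adjoint
endomorphism squares to a scalar. Polarising, `B₁ B₂ + B₂ B₁` is a scalar as well, and then so is
`[B₁, B₂]² = (B₁ B₂ + B₂ B₁)² - 4 B₁² B₂²`. By the moment map equation this is `(i i*)²`, a scalar
that kills the kernel of `i* : V → W`, which is nonzero because `dim W < dim V`.
-/

open Matrix Module

namespace Matrix

section CommRing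

variable {R : Type*} [CommRing R]

def skew4 (a b c d e f : R) : Matrix (Fin 4) (Fin 4) R :=
  !![0, a, b, c; -a, 0, d, e; -b, -d, 0, f; -c, -e, -f, 0]

theorem skew4_mul_skew4 (a b c d e f p q r s t u : R) :
    skew4 a b c d e f * skew4 p q r s t u =
      !![-(a*p) - b*q - c*r, -(b*s) - c*t, a*s - c*u, a*t + b*u;
        -(d*q) - e*r, -(a*p) - d*s - e*t, -(a*q) - e*u, -(a*r) + d*u;
        d*p - f*r, -(b*p) - f*t, -(b*q) - d*s - f*u, -(b*r) - d*t;
        e*p + f*q, -(c*p) + f*s, -(c*q) - e*s, -(c*r) - e*t - f*u] := by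
  ext i j
  fin_cases i <;> fin_cases j <;> simp [skew4, mul_apply, Fin.sum_univ_four] <;> ring

theorem skew4_mul_skew4_quadratic (a b c d e f p q r s t u : R) :
    let M := skew4 a b c d e f * skew4 p q r s t u
    (8 : R) • (M * M) = (4 * M.trace) • M + (2 * (M * M).trace - M.trace ^ 2) • 1 := by
  intro M
  simp only [M, skew4_mul_skew4]
  ext i j
  fin_cases i <;> fin_cases j <;> simp [Fin.sum_univ_four, trace] <;> ring

end CommRing

section Field

variable {K : Type*} [Field K] [NeZero (2 : K)]

theorem exists_eq_skew4_of_transpose_eq_neg {S : Matrix (Fin 4) (Fin 4) K} (hS : Sᵀ = -S) :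
    ∃ a b c d e f : K, S = skew4 a b c d e f := by
  have hanti (k l : Fin 4) : S l k = -S k l := congrFun (congrFun hS k) l
  have hdiag (k : Fin 4) : S k k = 0 := by
    have h2 : (2 : K) * S k k = 0 := by linear_combination hanti k k
    exact (mul_eq_zero.mp h2).resolve_left two_ne_zero
  refine ⟨S 0 1, S 0 2, S 0 3, S 1 2, S 1 3, S 2 3, ?_⟩
  ext k l
  fin_cases k <;> fin_cases l <;>
    simp [skew4, hdiag, hanti 0 1, hanti 0 2, hanti 0 3, hanti 1 2, hanti 1 3, hanti 2 3]

theorem mul_mul_self_eq_of_transpose_eq_neg {S T : Matrix (Fin 4) (Fin 4) K}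
    (hS : Sᵀ = -S) (hT : Tᵀ = -T) (htr : (S * T).trace = 0) :
    (4 : K) • (S * T * (S * T)) = (S * T * (S * T)).trace • 1 := by
  obtain ⟨a, b, c, d, e, f, rfl⟩ := exists_eq_skew4_of_transpose_eq_neg hS
  obtain ⟨p, q, r, s, t, u, rfl⟩ := exists_eq_skew4_of_transpose_eq_neg hT
  have h := skew4_mul_skew4_quadratic a b c d e f p q r s t u
  simp only [htr, mul_zero, zero_smul, zero_add, ne_eq, OfNat.ofNat_ne_zero,
    not_false_eq_true, zero_pow, sub_zero] at h
  apply smul_right_injective _ (two_ne_zero : (2 : K) ≠ 0)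
  simp only [smul_smul]
  convert h using 2
  norm_num

theorem exists_mul_self_eq_smul_one_of_isSelfAdjoint {J A : Matrix (Fin 4) (Fin 4) K}
    (hJ : Jᵀ = -J) (hdet : J.det ≠ 0) (hA : J.IsSelfAdjoint A) (htr : A.trace = 0) :
    ∃ c : K, A * A = c • 1 := by
  have hJu : IsUnit J.det := hdet.isUnit
  have hJinv : J⁻¹ᵀ = -J⁻¹ := by
    rw [transpose_nonsing_inv, hJ]
    refine inv_eq_left_inv ?_
    rw [neg_mul_neg, nonsing_inv_mul _ hJu]
  have hJA : (J * A)ᵀ = -(J * A) := by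
    rw [transpose_mul, hJ, mul_neg, ← hA]
  have hA' : J⁻¹ * (J * A) = A := nonsing_inv_mul_cancel_left _ _ hJu
  have h := mul_mul_self_eq_of_transpose_eq_neg hJinv hJA (by rwa [hA'])
  rw [hA'] at h
  refine ⟨(A * A).trace / 4, ?_⟩
  have h4 : (4 : K) ≠ 0 := by
    rw [show (4 : K) = 2 * 2 by norm_num]
    exact mul_ne_zero two_ne_zero two_ne_zero
  rw [div_eq_inv_mul, mul_smul, ← h, smul_smul, inv_mul_cancel₀ h4, one_smul]

end Field

end Matrix

theorem commutator_mul_self_eq_smul_one_s19 {K A : Type*} [CommRing K] [Ring A] [Algebra K A]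
    {x y : A} {c₁ c₂ c₃ : K} (h₁ : x * x = c₁ • 1) (h₂ : y * y = c₂ • 1)
    (h₃ : (x + y) * (x + y) = c₃ • 1) :
    (x * y - y * x) * (x * y - y * x) = ((c₃ - c₁ - c₂) ^ 2 - 4 * c₁ * c₂) • 1 := by
  have hanticomm : x * y + y * x = (c₃ - c₁ - c₂) • 1 := by
    rw [sub_smul, sub_smul, ← h₁, ← h₂, ← h₃]
    noncomm_ring
  have key : (x * y - y * x) * (x * y - y * x) =
      (x * y + y * x) * (x * y + y * x) - 2 • (x * (y * y) * x + y * (x * x) * y) := by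
    noncomm_ring
  rw [key, hanticomm, h₁, h₂]
  simp only [mul_smul_comm, smul_mul_assoc, mul_one, h₁, h₂]
  module

namespace LinearMap

variable {K V : Type*} [Field K] [NeZero (2 : K)] [AddCommGroup V] [Module K V]
  [FiniteDimensional K V] {B : LinearMap.BilinForm K V}

theorem exists_mul_self_eq_smul_one_of_isSelfAdjoint (hV : finrank K V = 4) (hB : B.Nondegenerate)
    (hskew : ∀ u v, B u v = -B v u) {T : Module.End K V} (hT : LinearMap.IsSelfAdjoint B T)
    (htr : trace K V T = 0) :
    ∃ c : K, T * T = c • 1 := by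
  let b : Basis (Fin 4) K V := finBasisOfFinrankEq K V hV
  have hJ : (BilinForm.toMatrix b B)ᵀ = -(BilinForm.toMatrix b B) := by
    ext k l
    simp only [transpose_apply, Matrix.neg_apply, BilinForm.toMatrix_apply]
    exact hskew (b l) (b k)
  have hA : (BilinForm.toMatrix b B).IsSelfAdjoint (toMatrix b b T) := by
    have hform : B.compLeft T = B.compRight T := by
      ext u v
      exact hT u v
    have := congrArg (BilinForm.toMatrix b) hform
    rwa [BilinForm.toMatrix_compLeft, BilinForm.toMatrix_compRight] at this
  obtain ⟨c, hc⟩ := Matrix.exists_mul_self_eq_smul_one_of_isSelfAdjoint hJ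
    ((BilinForm.nondegenerate_iff_det_ne_zero b).mp hB) hA (by rwa [← trace_eq_matrix_trace])
  refine ⟨c, (toMatrix b b).injective ?_⟩
  rw [toMatrix_mul, hc, map_smul, toMatrix_one]

end LinearMap

theorem stmt19_general
    (V W : Type) [AddCommGroup V] [Module ℂ V] [FiniteDimensional ℂ V]
    [AddCommGroup W] [Module ℂ W] [FiniteDimensional ℂ W]
    (BV : LinearMap.BilinForm ℂ V)
    (hVnd : BV.Nondegenerate)
    (hVsymp : ∀ u v : V, BV u v = -BV v u)
    (hV4 : Module.finrank ℂ V = 4) (hW3 : Module.finrank ℂ W = 3)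
    (B₁ B₂ : Module.End ℂ V) (i : W →ₗ[ℂ] V) (j : V →ₗ[ℂ] W)
    (hB₁ : ∀ u v : V, BV (B₁ u) v = BV u (B₁ v))
    (hB₂ : ∀ u v : V, BV (B₂ u) v = BV u (B₂ v))
    (htr₁ : LinearMap.trace ℂ V B₁ = 0) (htr₂ : LinearMap.trace ℂ V B₂ = 0)
    (hADHM : B₁ * B₂ - B₂ * B₁ + i ∘ₗ j = 0) :
    (i ∘ₗ j) ∘ₗ (i ∘ₗ j) = 0 := by
  have hB₁₂ : LinearMap.IsSelfAdjoint BV ⇑(B₁ + B₂) := LinearMap.IsAdjointPair.add hB₁ hB₂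
  obtain ⟨c₁, hc₁⟩ := BV.exists_mul_self_eq_smul_one_of_isSelfAdjoint hV4 hVnd hVsymp hB₁ htr₁
  obtain ⟨c₂, hc₂⟩ := BV.exists_mul_self_eq_smul_one_of_isSelfAdjoint hV4 hVnd hVsymp hB₂ htr₂
  obtain ⟨c₃, hc₃⟩ := BV.exists_mul_self_eq_smul_one_of_isSelfAdjoint hV4 hVnd hVsymp hB₁₂
    (by rw [map_add, htr₁, htr₂, add_zero])
  have hij : i ∘ₗ j = B₂ * B₁ - B₁ * B₂ := by
    rw [eq_neg_of_add_eq_zero_right hADHM, neg_sub]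
  have hsq : (i ∘ₗ j) ∘ₗ (i ∘ₗ j) = ((c₃ - c₂ - c₁) ^ 2 - 4 * c₂ * c₁) • 1 := by
    rw [← Module.End.mul_eq_comp, hij]
    exact commutator_mul_self_eq_smul_one_s19 hc₂ hc₁ (by rwa [add_comm])
  obtain ⟨v, hv, hv0⟩ := Submodule.ne_bot_iff _ |>.mp <|
    LinearMap.ker_ne_bot_of_finrank_lt (f := j) (by omega)
  generalize (c₃ - c₂ - c₁) ^ 2 - 4 * c₂ * c₁ = s at hsq
  have hsv : s • v = 0 := by simpa [LinearMap.mem_ker.mp hv] using (congrArg (· v) hsq).symm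
  rw [hsq, (smul_eq_zero.mp hsv).resolve_right hv0, zero_smul]

/-- Let `V` be a 4-dimensional symplectic ℂ-vector space and `W` a
3-dimensional orthogonal ℂ-vector space.  If `B₁, B₂` are trace-free self-adjoint
endomorphisms of `V` and `i : W → V` (with adjoint `j = i*`) satisfies
`[B₁,B₂] + i i* = 0`, then `(i i*)² = 0`. -/
theorem stmt19
    (V W : Type) [AddCommGroup V] [Module ℂ V] [FiniteDimensional ℂ V]
    [AddCommGroup W] [Module ℂ W] [FiniteDimensional ℂ W]
    (BV : LinearMap.BilinForm ℂ V) (BW : LinearMap.BilinForm ℂ W)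
    (hVnd : BV.Nondegenerate) (hWnd : BW.Nondegenerate)
    (hVsymp : ∀ u v : V, BV u v = -BV v u)
    (hWorth : ∀ u v : W, BW u v = BW v u)
    (hV4 : Module.finrank ℂ V = 4) (hW3 : Module.finrank ℂ W = 3)
    (B₁ B₂ : Module.End ℂ V) (i : W →ₗ[ℂ] V) (j : V →ₗ[ℂ] W)
    (hB₁ : ∀ u v : V, BV (B₁ u) v = BV u (B₁ v))
    (hB₂ : ∀ u v : V, BV (B₂ u) v = BV u (B₂ v))
    (htr₁ : LinearMap.trace ℂ V B₁ = 0) (htr₂ : LinearMap.trace ℂ V B₂ = 0)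
    (hadj : ∀ (w : W) (v : V), BW w (j v) = BV (i w) v)
    (hADHM : B₁ * B₂ - B₂ * B₁ + i ∘ₗ j = 0) :
    (i ∘ₗ j) ∘ₗ (i ∘ₗ j) = 0 :=
  stmt19_general V W BV hVnd hVsymp hV4 hW3 B₁ B₂ i j hB₁ hB₂ htr₁ htr₂ hADHM
end
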